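/- arXiv:2210.05269 — 2 statements merged into one kernel-verified Lean document; each statement's English description precedes it below -/
import Mathlib

section
/- For every ploidy profile m = (m_1, ..., m_n) with m_1 >= 2, the simplification process terminates after finitely many steps; that is, the simplification sequence sigma(m) is a finite sequence of ploidy profiles whose last element is a simple ploidy profile. -/
/-!
Formalization preamble for "Autopolyploidy, allopolyploidy, and phylogenetic
networks with horizontal arcs" (Huber & Maher).

Networks are finite directed multigraphs whose vertices and arcs are (finitely
many) natural numbers; parallel arcs (beads) are allowed, loops are not.
-/

namespace Ploidy

/-- A finite directed multigraph: both vertex names and arc identifiers are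
natural numbers; `src`/`tgt` give the endpoints of each arc. -/
structure Net where
  verts : Finset ℕ
  arcs : Finset ℕ
  src : ℕ → ℕ
  tgt : ℕ → ℕ

/-- The indegree of a vertex. -/
def inDeg (G : Net) (v : ℕ) : ℕ := (G.arcs.filter fun a => G.tgt a = v).card

/-- The outdegree of a vertex. -/
def outDeg (G : Net) (v : ℕ) : ℕ := (G.arcs.filter fun a => G.src a = v).card

def IsLeafN (G : Net) (v : ℕ) : Prop := v ∈ G.verts ∧ inDeg G v = 1 ∧ outDeg G v = 0
def IsTreeVert (G : Net) (v : ℕ) : Prop := v ∈ G.verts ∧ inDeg G v = 1 ∧ outDeg G v = 2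
def IsReticN (G : Net) (v : ℕ) : Prop := v ∈ G.verts ∧ inDeg G v = 2 ∧ outDeg G v = 1
def IsRootN (G : Net) (v : ℕ) : Prop := v ∈ G.verts ∧ inDeg G v = 0

instance (G : Net) (v : ℕ) : Decidable (IsLeafN G v) :=
  decidable_of_iff (v ∈ G.verts ∧ inDeg G v = 1 ∧ outDeg G v = 0) Iff.rfl

/-- `IsWalk G l u v`: the list of arcs `l` forms a directed walk from `u` to `v`. -/
def IsWalk (G : Net) : List ℕ → ℕ → ℕ → Prop
  | [], u, v => u = v ∧ u ∈ G.verts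
  | a :: l, u, v => a ∈ G.arcs ∧ G.src a = u ∧ IsWalk G l (G.tgt a) v

/-- The number of directed paths from `u` to `v` (in a DAG every directed walk is
a path, and there are finitely many of them). -/
noncomputable def nPaths (G : Net) (u v : ℕ) : ℕ := Set.ncard {l : List ℕ | IsWalk G l u v}

/-- `a` is an arc from `u` to `v`. -/
def ArcFT (G : Net) (a u v : ℕ) : Prop := a ∈ G.arcs ∧ G.src a = u ∧ G.tgt a = v

/-- `u` is a parent of `v`. -/
def IsParent (G : Net) (u v : ℕ) : Prop := ∃ a, ArcFT G a u v

/-- `w` is below `u` (reachable from `u` by a directed walk, possibly `u = w`). -/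
def BelowV (G : Net) (u w : ℕ) : Prop := ∃ l, IsWalk G l u w

/-- `v` is an end vertex of a pair of parallel arcs (a bead). -/
def InBead (G : Net) (v : ℕ) : Prop :=
  ∃ a b, a ∈ G.arcs ∧ b ∈ G.arcs ∧ a ≠ b ∧ G.src a = G.src b ∧ G.tgt a = G.tgt b ∧
    (G.src a = v ∨ G.tgt a = v)

/-- `G` is beadless: there is no pair of parallel arcs. -/
def Beadless (G : Net) : Prop := ∀ v, ¬ InBead G v

/-- `G` is a (rooted, binary) phylogenetic network in the sense of Huber–Maher:
a rooted DAG, possibly with beads but without loops, with a unique root of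
indegree 0 and outdegree 2, all of whose other vertices are leaves, tree
vertices or reticulation vertices. -/
structure IsPhylo (G : Net) : Prop where
  src_mem : ∀ a ∈ G.arcs, G.src a ∈ G.verts
  tgt_mem : ∀ a ∈ G.arcs, G.tgt a ∈ G.verts
  no_loop : ∀ a ∈ G.arcs, G.src a ≠ G.tgt a
  acyclic : ∀ (v : ℕ) (l : List ℕ), l ≠ [] → ¬ IsWalk G l v v
  root_exu : ∃! r, IsRootN G r
  root_out : ∀ r, IsRootN G r → outDeg G r = 2
  types : ∀ v ∈ G.verts, IsRootN G v ∨ IsLeafN G v ∨ IsTreeVert G v ∨ IsReticN G v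

/-- An HGT-consistent labelling: (P1), (P2) and (P3) (the latter required only for
reticulation vertices not contained in beads). -/
def IsHGT (G : Net) (t : ℕ → ℝ) : Prop :=
  (∀ v ∈ G.verts, 0 ≤ t v) ∧
  (∀ a ∈ G.arcs,
      (IsReticN G (G.tgt a) → t (G.src a) ≤ t (G.tgt a)) ∧
      (¬ IsReticN G (G.tgt a) → t (G.src a) < t (G.tgt a))) ∧
  (∀ u ∈ G.verts, ¬ IsLeafN G u → ∃ v, IsParent G u v ∧ t u < t v) ∧
  (∀ v, IsReticN G v → ¬ InBead G v → ∃! u, IsParent G u v ∧ t u = t v)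

/-- `v` is a reticulation vertex (not contained in a bead) violating (P3). -/
def ViolatesP3 (G : Net) (t : ℕ → ℝ) (v : ℕ) : Prop :=
  IsReticN G v ∧ ¬ InBead G v ∧ ¬ (∃! u, IsParent G u v ∧ t u = t v)

/-- A weak HGT-consistent labelling: (P1), (P2) and (P3'): at most one reticulation
vertex `v`, with distinct parents `u₁, u₂` such that `u₂` is below `u₁` and
`t u₁ ≠ t v ≠ t u₂`, violates (P3). -/
def IsWeakHGT (G : Net) (t : ℕ → ℝ) : Prop :=
  (∀ v ∈ G.verts, 0 ≤ t v) ∧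
  (∀ a ∈ G.arcs,
      (IsReticN G (G.tgt a) → t (G.src a) ≤ t (G.tgt a)) ∧
      (¬ IsReticN G (G.tgt a) → t (G.src a) < t (G.tgt a))) ∧
  (∀ u ∈ G.verts, ¬ IsLeafN G u → ∃ v, IsParent G u v ∧ t u < t v) ∧
  (∀ v w, ViolatesP3 G t v → ViolatesP3 G t w → v = w) ∧
  (∀ v, ViolatesP3 G t v →
      ∃ u1 u2, u1 ≠ u2 ∧ IsParent G u1 v ∧ IsParent G u2 v ∧ BelowV G u1 u2 ∧
        t u1 ≠ t v ∧ t u2 ≠ t v)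

/-! ### Ploidy profiles and the simplification sequence -/

/-- A ploidy profile: a nonempty descending list of positive integers; the entry at
(0-based) position `i` is indexed by the taxon `x_{i+1}`. -/
def IsProfileL (l : List ℕ) : Prop := l ≠ [] ∧ l.Pairwise (· ≥ ·) ∧ ∀ x ∈ l, 1 ≤ x

/-- A simple ploidy profile: first component at least 2, all other components 1. -/
def IsSimpleP (l : List ℕ) : Prop := l ≠ [] ∧ 2 ≤ l.headI ∧ ∀ x ∈ l.tail, x = 1

/-- A strictly simple ploidy profile. -/
def IsStrictlySimpleP (l : List ℕ) : Prop := IsSimpleP l ∧ l.length = 1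

/-- Insert `x` into a descending list, directly after the last occurrence of the
value `x` (i.e. after all entries `≥ x`). -/
def insertDesc (x : ℕ) : List ℕ → List ℕ
  | [] => [x]
  | y :: ys => if x ≤ y then y :: insertDesc x ys else x :: y :: ys

/-- One step of the simplification process for ploidy profiles; simple profiles are
fixed points.  With `α = m₁ - m₂`: if `α = 0` delete `m₁`; if `α > m₂` replace `m₁`
by `α`; if `0 < α ≤ m₂` delete `m₁` and insert `α` directly after the last
occurrence of the value `α`. -/
def simpStep (l : List ℕ) : List ℕ :=
  if 2 ≤ l.headI ∧ ∀ x ∈ l.tail, x = 1 then l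
  else
    match l with
    | m1 :: m2 :: rest =>
        if m1 = m2 then m2 :: rest
        else if m2 < m1 - m2 then (m1 - m2) :: m2 :: rest
        else insertDesc (m1 - m2) (m2 :: rest)
    | _ => l

/-- `mt` is the (simple) terminal element of the simplification sequence of `m`. -/
def IsTerminal (m mt : List ℕ) : Prop := IsSimpleP mt ∧ ∃ k, simpStep^[k] m = mt

/-- A practical ploidy profile: simple but not strictly simple, or `(2^l)`, `l ≥ 1`. -/
def Practical (l : List ℕ) : Prop :=
  (IsSimpleP l ∧ 2 ≤ l.length) ∨ (l.length = 1 ∧ ∃ j, 1 ≤ j ∧ l.headI = 2 ^ j)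

/-- An arc-rich (strictly simple) ploidy profile: the binary representation of its
single component has dimension at least two. -/
def ArcRich (l : List ℕ) : Prop :=
  l.length = 1 ∧ 2 ≤ l.headI ∧ 2 ≤ (Nat.bits l.headI).count true

/-! ### Realizations of ploidy profiles -/

/-- A network together with an indexing of its leaves by the positions of a
ploidy profile. -/
structure LNet where
  net : Net
  leaf : ℕ → ℕ

/-- `R` is a phylogenetic network realizing the ploidy profile `m`: the leaves of
`R.net` are bijectively indexed by the positions of `m` and, for every `i`, the
number of directed paths from the root to the leaf `R.leaf i` is the `i`-th
component of `m`. -/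
def RealizesL (R : LNet) (m : List ℕ) : Prop :=
  IsPhylo R.net ∧
  (∀ i < m.length, IsLeafN R.net (R.leaf i)) ∧
  (∀ i j, i < m.length → j < m.length → R.leaf i = R.leaf j → i = j) ∧
  (∀ v, IsLeafN R.net v → ∃ i < m.length, R.leaf i = v) ∧
  (∀ i < m.length, ∀ r, IsRootN R.net r → nPaths R.net r (R.leaf i) = m.getD i 0)

/-! ### Concrete constructions: bead chains and the core network `B(m)` -/

/-- Build a network from a list of arcs (as (source, target) pairs); arc
identifiers are positions in the list, so repeated pairs yield beads. -/
def mkNet (l : List (ℕ × ℕ)) : Net where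
  verts := (l.map Prod.fst ++ l.map Prod.snd).toFinset
  arcs := Finset.range l.length
  src := fun i => (l.getD i (0, 0)).1
  tgt := fun i => (l.getD i (0, 0)).2

/-- The chain `B(l)` of `l` beads with a pendant leaf: vertex `2*j` is the tree
vertex of the `(j+1)`-st bead, `2*j+1` its reticulation vertex `h_{j+1}`, there is
an arc from `h_j` to the tree vertex of the next bead, and `2*l` is the pendant
leaf `x₁` attached by the arc `(h_l, x₁)`. -/
def beadChain (l : ℕ) : Net :=
  mkNet ((List.range l).flatMap fun j => [(2*j, 2*j+1), (2*j, 2*j+1), (2*j+1, 2*j+2)])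

/-- The decreasing list `(i₁, …, i_k)` of exponents of the binary representation
of `m₁`. -/
def expList (m1 : ℕ) : List ℕ :=
  ((List.range (m1+1)).filter fun j => m1.testBit j).reverse

/-- First vertex code available for the leaves `x_2, …, x_n` in `BNet`. -/
def xBase (m1 : ℕ) : ℕ := 2 * (expList m1).headI + 2 * (expList m1).length + 10

/-- The arcs of the core network `B(m)` for the simple profile `(m₁, 1, …, 1)` on
`n` taxa: a chain of `i₁` beads with pendant leaf `x₁ = 0` (root is the vertex
`2`), one root arc subdivided by `s_k` and, for `2 ≤ j ≤ k`, an arc `(s_j, s_j')`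
where `s_j'` subdivides the outgoing arc of the reticulation vertex having exactly
`i_j` reticulation vertices strictly below it and `s_2, …, s_{k-1}` subdivide the
arc `(s_k, s_k')`; if `n ≥ 2` a caterpillar tree on the leaves `x_2, …, x_n`
(codes `xBase m₁ + i`) is attached via a subdivision vertex `w` (placed on a root
arc if `k = 1`, on `(s_k, s_k')` if `k = 2`, and on `(s_{k-1}, s_k')` if `k ≥ 3`). -/
def BArcs (m1 n : ℕ) : List (ℕ × ℕ) :=
  let E := expList m1
  let k := E.length
  let i1 := E.headI
  let hv : ℕ → ℕ := fun j => 2*j + 1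
  let tv : ℕ → ℕ := fun j => 2*j
  let nxt : ℕ → ℕ := fun j => if j = i1 then 0 else 2*j + 2
  let S' : ℕ → ℕ := fun j => 2*i1 + 2 + j
  let P : ℕ → ℕ := fun j => 2*i1 + k + 2 + j
  let w : ℕ := 2*i1 + 2*k + 4
  let L : ℕ := 2*i1 + 2*k + 10
  let x : ℕ → ℕ := fun i => L + i
  let cv : ℕ → ℕ := fun i => L + n + i
  let r : ℕ → ℕ := fun t => i1 - E.getD (t-1) 0
  let rootArcs : List (ℕ × ℕ) :=
    if 2 ≤ k then [(tv 1, hv 1), (tv 1, P k), (P k, hv 1)]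
    else if 2 ≤ n then [(tv 1, hv 1), (tv 1, w), (w, hv 1)]
    else [(tv 1, hv 1), (tv 1, hv 1)]
  let otherBeads : List (ℕ × ℕ) :=
    (List.range' 2 (i1 - 1)).flatMap fun j => [(tv j, hv j), (tv j, hv j)]
  let chainArcs : List (ℕ × ℕ) :=
    (List.range' 1 i1).flatMap fun j =>
      match (List.range' 2 (k-1)).find? (fun t => r t == j) with
      | some t => [(hv j, S' t), (S' t, nxt j)]
      | none => [(hv j, nxt j)]
  let sChain : List ℕ :=
    [P k] ++ (List.range' 2 (k-2)).map P ++ (if 2 ≤ n then [w] else []) ++ [S' k]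
  let sArcs : List (ℕ × ℕ) :=
    if 2 ≤ k then (sChain.zip sChain.tail) ++ (List.range' 2 (k-2)).map (fun j => (P j, S' j))
    else []
  let catArcs : List (ℕ × ℕ) :=
    if n ≤ 1 then []
    else if n = 2 then [(w, x 2)]
    else [(w, cv 2)] ++
      ((List.range' 2 (n-3)).flatMap fun i => [(cv i, x i), (cv i, cv (i+1))]) ++
      [(cv (n-1), x (n-1)), (cv (n-1), x n)]
  rootArcs ++ otherBeads ++ chainArcs ++ sArcs ++ catArcs

/-- The core network `B(m)` for a simple profile with first component `m1` on `n`
taxa. -/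
def BNet (m1 n : ℕ) : Net := mkNet (BArcs m1 n)

/-- The core network `B(m)` of a ploidy profile whose terminal element is `mt`,
together with its leaf indexing (leaf `0` is `x₁ = 0`, leaf `i` is `x_{i+1}`). -/
def BLNet (mt : List ℕ) : LNet where
  net := BNet mt.headI mt.length
  leaf := fun i => if i = 0 then 0 else xBase mt.headI + (i + 1)

/-- The naive realization of the simple profile `(m₁, 1, …, 1)` on `n` taxa: a
directed path `0, 1, …, n + 2m₁ - 3` (with `v_j = j - 1`, `w_i = m₁ + i - 3`,
`v_j' = n + 2m₁ - 3 - j` and `x₁ = n + 2m₁ - 3`) together with the arcs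
`(v_j, v_j')` and the pendant leaf arcs `(w_i, x_i)` with `x_i = n + 2m₁ + i`. -/
def naiveNet (m1 n : ℕ) : Net :=
  mkNet (((List.range (n + 2*m1 - 3)).map fun p => (p, p+1)) ++
    ((List.range' 1 (m1 - 1)).map fun j => (j - 1, n + 2*m1 - 3 - j)) ++
    ((List.range' 2 (n - 1)).map fun i => (m1 + i - 3, n + 2*m1 + i)))

/-! ### Cherry modification operations -/

/-- `reduce(a,b)`: delete the leaf `b` of the cherry `{a,b}` together with its
incoming arc and suppress the resulting degree-two vertex (collapsing the network
to the single vertex `a` when the common parent is the root). -/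
def ReduceOp (G G' : Net) : Prop :=
  ∃ a b p ea eb, a ≠ b ∧ IsLeafN G a ∧ IsLeafN G b ∧
    ArcFT G ea p a ∧ ArcFT G eb p b ∧ ea ≠ eb ∧
    G'.verts = (G.verts.erase b).erase p ∧
    G'.arcs = (G.arcs.erase eb).erase ea ∧
    ((IsRootN G p ∧ ∀ e ∈ G'.arcs, G'.src e = G.src e ∧ G'.tgt e = G.tgt e) ∨
     (∃ ep q, ArcFT G ep q p ∧
        (∀ e ∈ G'.arcs, e ≠ ep → G'.src e = G.src e ∧ G'.tgt e = G.tgt e) ∧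
        G'.src ep = q ∧ G'.tgt ep = a))

/-- `cut(a,b)`: delete the reticulation arc of the reticulate cherry `{a,b}` with
reticulation leaf `b`, suppressing the two resulting degree-two vertices. -/
def CutOp (G G' : Net) : Prop :=
  ∃ a b pa pb e1 e2 e3 e4 e5 q r,
    a ≠ b ∧ IsLeafN G a ∧ IsLeafN G b ∧ IsReticN G pb ∧
    ArcFT G e1 pa a ∧ ArcFT G e2 pb b ∧ ArcFT G e3 pa pb ∧
    ArcFT G e4 q pb ∧ e3 ≠ e4 ∧ ArcFT G e5 r pa ∧
    G'.verts = (G.verts.erase pa).erase pb ∧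
    G'.arcs = ((G.arcs.erase e3).erase e1).erase e2 ∧
    (∀ e ∈ G'.arcs, e ≠ e4 → e ≠ e5 → G'.src e = G.src e ∧ G'.tgt e = G.tgt e) ∧
    G'.src e5 = r ∧ G'.tgt e5 = a ∧
    G'.src e4 = q ∧ G'.tgt e4 = b

/-- `simp(a)`: for a type-1 degenerate cherry `{a}` (sole leaf whose parent is the
reticulation vertex of a bead), delete one arc of the bead, suppressing the
resulting degree-two vertex and collapsing the outgoing arc of the tree vertex of
the bead. -/
def SimpOp (G G' : Net) : Prop :=
  ∃ a h u e1 e2 e3,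
    IsLeafN G a ∧ (∀ w, IsLeafN G w → w = a) ∧ IsReticN G h ∧
    ArcFT G e1 u h ∧ ArcFT G e2 u h ∧ e1 ≠ e2 ∧ ArcFT G e3 h a ∧
    ((IsRootN G u ∧ G'.verts = {a} ∧ G'.arcs = ∅) ∨
     (∃ eu q, ArcFT G eu q u ∧
        G'.verts = (G.verts.erase h).erase u ∧
        G'.arcs = ((G.arcs.erase e2).erase e3).erase e1 ∧
        (∀ e ∈ G'.arcs, e ≠ eu → G'.src e = G.src e ∧ G'.tgt e = G.tgt e) ∧
        G'.src eu = q ∧ G'.tgt eu = a))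

/-- `trim(a)`: for a type-2 degenerate cherry `{a}` (sole leaf whose parent `p` is
a reticulation vertex with distinct parents `q₁, q₂`), delete the arc `(q₁,p)`
(case (a): there is a vertex `q` with arcs `(q,q₁)`, `(q,q₂)`, `(q₁,q₂)`),
respectively one of the two parallel arcs from `q` to `q₂` (case (b): there is an
arc `(q₁,q)` and a pair of parallel arcs from `q` to `q₂`), suppressing the two
resulting degree-two vertices. -/
def TrimOp (G G' : Net) : Prop :=
  ∃ a p g0, IsLeafN G a ∧ (∀ w, IsLeafN G w → w = a) ∧ IsReticN G p ∧ ArcFT G g0 p a ∧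
   ((∃ q q1 q2 f1 f2 f3 g1 g2,
      ArcFT G g1 q1 p ∧ ArcFT G g2 q2 p ∧ g1 ≠ g2 ∧ q1 ≠ q2 ∧
      ArcFT G f1 q q1 ∧ ArcFT G f2 q q2 ∧ ArcFT G f3 q1 q2 ∧
      G'.verts = (G.verts.erase q1).erase p ∧
      G'.arcs = ((G.arcs.erase g1).erase f3).erase g0 ∧
      (∀ e ∈ G'.arcs, e ≠ f1 → e ≠ g2 → G'.src e = G.src e ∧ G'.tgt e = G.tgt e) ∧
      G'.src f1 = q ∧ G'.tgt f1 = q2 ∧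
      G'.src g2 = q2 ∧ G'.tgt g2 = a) ∨
    (∃ q q1 q2 eq' f1 f2 g1 g2,
      ArcFT G g1 q1 p ∧ ArcFT G g2 q2 p ∧ g1 ≠ g2 ∧ q1 ≠ q2 ∧
      ArcFT G eq' q1 q ∧ ArcFT G f1 q q2 ∧ ArcFT G f2 q q2 ∧ f1 ≠ f2 ∧
      G'.verts = (G.verts.erase q).erase q2 ∧
      G'.arcs = ((G.arcs.erase f2).erase f1).erase g2 ∧
      (∀ e ∈ G'.arcs, e ≠ eq' → G'.src e = G.src e ∧ G'.tgt e = G.tgt e) ∧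
      G'.src eq' = q1 ∧ G'.tgt eq' = p))

/-- A single cherry modification operation: reduce, cut or simp. -/
def CherryModOp (G G' : Net) : Prop := ReduceOp G G' ∨ CutOp G G' ∨ SimpOp G G'

/-- A single weak cherry modification operation: reduce, cut, simp or trim. -/
def WeakCherryModOp (G G' : Net) : Prop := CherryModOp G G' ∨ TrimOp G G'

/-- The network consisting of a single vertex (and no arcs). -/
def IsSingleV (G : Net) : Prop := ∃ v, G.verts = {v} ∧ G.arcs = ∅

/-- `G` admits a complete cherry modification sequence, i.e. `G` is an orchard. -/
def IsOrchardN (G : Net) : Prop :=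
  ∃ G', Relation.ReflTransGen CherryModOp G G' ∧ IsSingleV G'

/-- `G` admits a complete weak cherry modification sequence, i.e. `G` is a weak
orchard. -/
def IsWeakOrchardN (G : Net) : Prop :=
  ∃ G', Relation.ReflTransGen WeakCherryModOp G G' ∧ IsSingleV G'

/-! ### The traceback through the simplification sequence -/

/-- Traceback step in case `α = 0`: replace the leaf indexing the first component
of `m''` by a cherry on two new leaves. -/
def CherryExpandOp (R'' R' : LNet) : Prop :=
  ∃ y1 y2 b1 b2,
    y1 ∉ R''.net.verts ∧ y2 ∉ R''.net.verts ∧ y1 ≠ y2 ∧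
    b1 ∉ R''.net.arcs ∧ b2 ∉ R''.net.arcs ∧ b1 ≠ b2 ∧
    R'.net.verts = R''.net.verts ∪ {y1, y2} ∧
    R'.net.arcs = R''.net.arcs ∪ {b1, b2} ∧
    (∀ a ∈ R''.net.arcs, R'.net.src a = R''.net.src a ∧ R'.net.tgt a = R''.net.tgt a) ∧
    R'.net.src b1 = R''.leaf 0 ∧ R'.net.tgt b1 = y1 ∧
    R'.net.src b2 = R''.leaf 0 ∧ R'.net.tgt b2 = y2 ∧
    R'.leaf 0 = y1 ∧ R'.leaf 1 = y2 ∧ (∀ i, 1 ≤ i → R'.leaf (i + 1) = R''.leaf i)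

/-- Traceback step in case `α > m₂'`: subdivide the incoming arcs of the leaves
indexing the first and second components of `m''` by new vertices `u` and `v` and
add the arc `(v,u)`. -/
def AddArcOp (R'' R' : LNet) : Prop :=
  ∃ u v a0 a1 b0 b1 c,
    u ∉ R''.net.verts ∧ v ∉ R''.net.verts ∧ u ≠ v ∧
    a0 ∈ R''.net.arcs ∧ R''.net.tgt a0 = R''.leaf 0 ∧
    a1 ∈ R''.net.arcs ∧ R''.net.tgt a1 = R''.leaf 1 ∧ a0 ≠ a1 ∧
    b0 ∉ R''.net.arcs ∧ b1 ∉ R''.net.arcs ∧ c ∉ R''.net.arcs ∧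
    b0 ≠ b1 ∧ b0 ≠ c ∧ b1 ≠ c ∧
    R'.net.verts = R''.net.verts ∪ {u, v} ∧
    R'.net.arcs = R''.net.arcs ∪ {b0, b1, c} ∧
    (∀ a ∈ R''.net.arcs, a ≠ a0 → a ≠ a1 →
        R'.net.src a = R''.net.src a ∧ R'.net.tgt a = R''.net.tgt a) ∧
    R'.net.src a0 = R''.net.src a0 ∧ R'.net.tgt a0 = u ∧
    R'.net.src a1 = R''.net.src a1 ∧ R'.net.tgt a1 = v ∧
    R'.net.src b0 = u ∧ R'.net.tgt b0 = R''.leaf 0 ∧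
    R'.net.src b1 = v ∧ R'.net.tgt b1 = R''.leaf 1 ∧
    R'.net.src c = v ∧ R'.net.tgt c = u ∧
    (∀ i, R'.leaf i = R''.leaf i)

/-- Traceback step in case `0 < α ≤ m₂'`, where the inserted component `α` sits at
(0-based) position `j` of `m''`: subdivide the incoming arc of the leaf indexing
`α` by a vertex `v`, replace the leaf indexing the first component of `m''` by a
cherry, subdivide the incoming arc of one of the two new cherry leaves by a vertex
`u`, add the arc `(v,u)` and delete the leaf indexing `α` together with its
incoming arc, suppressing the resulting degree-two vertex. -/
def InsertBackOp (j : ℕ) (R'' R' : LNet) : Prop :=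
  ∃ u y1 y2 c1 c2 c3 az,
    u ∉ R''.net.verts ∧ y1 ∉ R''.net.verts ∧ y2 ∉ R''.net.verts ∧
    u ≠ y1 ∧ u ≠ y2 ∧ y1 ≠ y2 ∧
    c1 ∉ R''.net.arcs ∧ c2 ∉ R''.net.arcs ∧ c3 ∉ R''.net.arcs ∧
    c1 ≠ c2 ∧ c1 ≠ c3 ∧ c2 ≠ c3 ∧
    az ∈ R''.net.arcs ∧ R''.net.tgt az = R''.leaf j ∧
    R'.net.verts = (R''.net.verts.erase (R''.leaf j)) ∪ {u, y1, y2} ∧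
    R'.net.arcs = R''.net.arcs ∪ {c1, c2, c3} ∧
    (∀ a ∈ R''.net.arcs, a ≠ az →
        R'.net.src a = R''.net.src a ∧ R'.net.tgt a = R''.net.tgt a) ∧
    R'.net.src az = R''.net.src az ∧ R'.net.tgt az = u ∧
    R'.net.src c1 = R''.leaf 0 ∧ R'.net.tgt c1 = u ∧
    R'.net.src c2 = u ∧ R'.net.tgt c2 = y1 ∧
    R'.net.src c3 = R''.leaf 0 ∧ R'.net.tgt c3 = y2 ∧
    R'.leaf 0 = y1 ∧ R'.leaf 1 = y2 ∧
    (∀ i, 1 ≤ i → i < j → R'.leaf (i + 1) = R''.leaf i) ∧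
    (∀ i, j < i → R'.leaf i = R''.leaf i)

/-- One step of the traceback: `R'` is a realization of the non-simple profile `m'`
obtained from the realization `R''` of `simpStep m'` by the surgery dictated by the
case (`α = 0`, `α > m₂'` or `0 < α ≤ m₂'`) that produced `simpStep m'` from `m'`. -/
def TraceStep (m' : List ℕ) (R'' R' : LNet) : Prop :=
  2 ≤ m'.length ∧ ¬ IsSimpleP m' ∧
  ((m'.headI = m'.tail.headI ∧ CherryExpandOp R'' R') ∨
   (m'.tail.headI < m'.headI - m'.tail.headI ∧ AddArcOp R'' R') ∨
   (0 < m'.headI - m'.tail.headI ∧ m'.headI - m'.tail.headI ≤ m'.tail.headI ∧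
     InsertBackOp
       ((m'.tail.takeWhile fun y => decide (m'.headI - m'.tail.headI ≤ y)).length)
       R'' R'))

/-- `TracebackFrom core m N`: `N` is a network `N(m)` obtainable by the traceback
through the simplification sequence of `m`, initialized with the core network
`core`. -/
inductive TracebackFrom (core : LNet) : List ℕ → LNet → Prop
  | base (m : List ℕ) : IsSimpleP m → TracebackFrom core m core
  | step (m' : List ℕ) (R'' R' : LNet) :
      TracebackFrom core (simpStep m') R'' → TraceStep m' R'' R' →
      TracebackFrom core m' R'

/-! ### Tree-based and tree-child networks -/

def subIn (G : Net) (A : Finset ℕ) (v : ℕ) : ℕ := (A.filter fun a => G.tgt a = v).card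
def subOut (G : Net) (A : Finset ℕ) (v : ℕ) : ℕ := (A.filter fun a => G.src a = v).card

/-- `G` is tree-based: some subset `A` of its arcs forms a spanning subdivision of a
rooted phylogenetic tree (with one extra incoming arc added to its root) whose
leaves are exactly the leaves of `G`; all remaining arcs of `G` join subdivision
vertices, and every subdivision vertex has total degree 3 in `G`. -/
def IsTreeBased (G : Net) : Prop :=
  ∃ A : Finset ℕ, A ⊆ G.arcs ∧
    (∃! r, r ∈ G.verts ∧ subIn G A r = 0) ∧
    (∀ r ∈ G.verts, subIn G A r = 0 → subOut G A r = 1) ∧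
    (∀ v ∈ G.verts,
        (subIn G A v = 0 ∧ subOut G A v = 1) ∨ (subIn G A v = 1 ∧ subOut G A v = 0) ∨
        (subIn G A v = 1 ∧ subOut G A v = 1) ∨ (subIn G A v = 1 ∧ subOut G A v = 2)) ∧
    (∀ v ∈ G.verts, subIn G A v = 1 → subOut G A v = 0 → IsLeafN G v) ∧
    (∀ v, IsLeafN G v → subIn G A v = 1 ∧ subOut G A v = 0) ∧
    (∀ a ∈ G.arcs, a ∉ A →
        subIn G A (G.src a) = 1 ∧ subOut G A (G.src a) = 1 ∧
        subIn G A (G.tgt a) = 1 ∧ subOut G A (G.tgt a) = 1) ∧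
    (∀ v ∈ G.verts, subIn G A v = 1 → subOut G A v = 1 → inDeg G v + outDeg G v = 3)

/-- `G` is tree-child (reticulation vertices contained in beads being ignored):
every vertex has a directed path to a leaf on which every vertex except possibly
the first one is either not a reticulation vertex or is contained in a bead. -/
def IsTreeChild (G : Net) : Prop :=
  ∀ v ∈ G.verts, ∃ (l : List ℕ) (w : ℕ), IsWalk G l v w ∧ IsLeafN G w ∧
    ∀ a ∈ l, IsReticN G (G.tgt a) → InBead G (G.tgt a)

/-! ### Multiple-labelled networks and the split operation -/

/-- A multiple-labelled network: a network together with a labelling map assigning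
to each leaf vertex the (0-based) position of the profile component it is labelled
with; distinct leaves may carry the same label. -/
structure MLNet where
  net : Net
  lab : ℕ → ℕ

/-- A multiple-labelled tree: a multiple-labelled network without reticulation
vertices. -/
def IsMLTree (R : MLNet) : Prop := ∀ v, ¬ IsReticN R.net v

/-- The multiple-labelled network `R` realizes the ploidy profile `m`: for every
position `i` of `m`, the total number of directed paths from the root to leaves
labelled `i` equals the `i`-th component of `m`. -/
def MLRealizes (R : MLNet) (m : List ℕ) : Prop :=
  IsPhylo R.net ∧
  (∀ v, IsLeafN R.net v → R.lab v < m.length) ∧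
  (∀ i < m.length, ∀ r, IsRootN R.net r →
      (∑ v ∈ R.net.verts.filter (fun v => IsLeafN R.net v ∧ R.lab v = i),
          nPaths R.net r v) = m.getD i 0)

/-- The arcs of the subgraph induced by the vertices below `c`. -/
def arcsBelow (G : Net) (c : ℕ) : Set ℕ :=
  {b | b ∈ G.arcs ∧ BelowV G c (G.src b) ∧ BelowV G c (G.tgt b)}

/-- `a` is a cut-arc of `G`: removing it disconnects its end vertices in the
underlying undirected graph. -/
def IsCutArc (G : Net) (a : ℕ) : Prop :=
  a ∈ G.arcs ∧
    ¬ Relation.ReflTransGen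
        (fun x y => ∃ b ∈ G.arcs, b ≠ a ∧
          ((G.src b = x ∧ G.tgt b = y) ∨ (G.src b = y ∧ G.tgt b = x)))
        (G.src a) (G.tgt a)

/-- The split operation: `R'` is obtained from `R` by deleting a reticulation
vertex `h` (with parents `p₁, p₂` and child `c`, where `(h,c)` is a cut-arc)
together with its three incident arcs, making a disjoint copy (via `φ` on vertices
and `ψ` on arcs) of the subgraph induced by the vertices below `c`, and attaching
one copy of `c` to `p₁` by an arc `(p₁,c)` and the other to `p₂` by an arc
`(p₂,c)`. -/
def SplitRel (R R' : MLNet) : Prop :=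
  ∃ (h p1 p2 c a0 a1 a2 : ℕ) (φ ψ : ℕ → ℕ),
    IsReticN R.net h ∧
    ArcFT R.net a0 h c ∧ IsCutArc R.net a0 ∧
    ArcFT R.net a1 p1 h ∧ ArcFT R.net a2 p2 h ∧
    a1 ≠ a2 ∧ a0 ≠ a1 ∧ a0 ≠ a2 ∧
    Set.InjOn φ {w | BelowV R.net c w} ∧
    (∀ w, BelowV R.net c w → φ w ∉ R.net.verts) ∧
    Set.InjOn ψ (arcsBelow R.net c) ∧
    (∀ b ∈ arcsBelow R.net c, ψ b ∉ R.net.arcs) ∧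
    (↑R'.net.verts : Set ℕ) =
      ((↑R.net.verts : Set ℕ) \ {h}) ∪ (φ '' {w | BelowV R.net c w}) ∧
    (↑R'.net.arcs : Set ℕ) =
      ((↑R.net.arcs : Set ℕ) \ {a0}) ∪ (ψ '' arcsBelow R.net c) ∧
    (∀ b ∈ R.net.arcs, b ≠ a0 → b ≠ a1 → b ≠ a2 →
        R'.net.src b = R.net.src b ∧ R'.net.tgt b = R.net.tgt b) ∧
    R'.net.src a1 = p1 ∧ R'.net.tgt a1 = c ∧
    R'.net.src a2 = p2 ∧ R'.net.tgt a2 = φ c ∧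
    (∀ b ∈ arcsBelow R.net c,
        R'.net.src (ψ b) = φ (R.net.src b) ∧ R'.net.tgt (ψ b) = φ (R.net.tgt b)) ∧
    (∀ v ∈ R.net.verts, v ≠ h → R'.lab v = R.lab v) ∧
    (∀ w, BelowV R.net c w → R'.lab (φ w) = R.lab w)

/-- Adjacency in ploidy profile space `𝒫(m)` (relative to an edit distance `D` on
multiple-labelled trees): both endpoints realize `m` and either one is obtained
from the other by a single split operation, or both are multiple-labelled trees at
`D`-distance 1. -/
def PEdge (m : List ℕ) (D : MLNet → MLNet → ℕ) (A B : MLNet) : Prop :=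
  MLRealizes A m ∧ MLRealizes B m ∧
    (SplitRel A B ∨ SplitRel B A ∨ (IsMLTree A ∧ IsMLTree B ∧ D A B = 1))

/-! A non-simple profile with `m₁ ≥ 2` has `m₂ ≥ 2`, so one simplification step produces
again a profile with first component at least 2 (the new first component is `m₂` or
`m₁ - m₂ > m₂`), while the sum of the components drops by `m₁` or by `m₂`. The sum is
therefore a termination measure. -/

theorem insertDesc_perm (x : ℕ) (l : List ℕ) : List.Perm (insertDesc x l) (x :: l) := by
  induction l with
  | nil => rfl
  | cons y ys ih =>
    unfold insertDesc
    split_ifs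
    · exact (ih.cons y).trans (List.Perm.swap x y ys)
    · rfl

theorem insertDesc_cons_of_le {x y : ℕ} (l : List ℕ) (h : x ≤ y) :
    insertDesc x (y :: l) = y :: insertDesc x l := by
  simp [insertDesc, h]

theorem pairwise_insertDesc {x : ℕ} {l : List ℕ} (h : l.Pairwise (· ≥ ·)) :
    (insertDesc x l).Pairwise (· ≥ ·) := by
  induction l with
  | nil => simp [insertDesc]
  | cons y ys ih =>
    rw [List.pairwise_cons] at h
    unfold insertDesc
    split_ifs with hxy
    · refine List.pairwise_cons.2 ⟨fun b hb => ?_, ih h.2⟩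
      rcases List.mem_cons.1 ((insertDesc_perm x ys).mem_iff.1 hb) with rfl | hb
      exacts [hxy, h.1 b hb]
    · refine List.pairwise_cons.2 ⟨List.forall_mem_cons.2 ⟨by omega, fun b hb => ?_⟩,
        List.pairwise_cons.2 h⟩
      exact (h.1 b hb).trans (by omega)

theorem IsProfileL.cons {a : ℕ} {l : List ℕ} (hl : IsProfileL l) (ha : l.headI ≤ a) :
    IsProfileL (a :: l) := by
  obtain ⟨hne, hsort, hpos⟩ := hl
  obtain ⟨b, t, rfl⟩ := List.exists_cons_of_ne_nil hne
  have hba : b ≤ a := ha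
  refine ⟨List.cons_ne_nil a _,
    List.pairwise_cons.2 ⟨List.forall_mem_cons.2 ⟨hba, ?_⟩, hsort⟩,
    List.forall_mem_cons.2 ⟨(hpos b List.mem_cons_self).trans hba, hpos⟩⟩
  exact fun x hx => ((List.pairwise_cons.1 hsort).1 x hx).trans hba

theorem IsProfileL.insertDesc {x : ℕ} {l : List ℕ} (hl : IsProfileL l) (hx : 1 ≤ x) :
    IsProfileL (insertDesc x l) := by
  have hperm := insertDesc_perm x l
  refine ⟨fun h => by simpa [h] using hperm.length_eq, pairwise_insertDesc hl.2.1,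
    fun y hy => ?_⟩
  rcases List.mem_cons.1 (hperm.mem_iff.1 hy) with rfl | hy
  exacts [hx, hl.2.2 y hy]

theorem IsProfileL.two_le_of_not_isSimpleP {m1 m2 : ℕ} {rest : List ℕ}
    (hm : IsProfileL (m1 :: m2 :: rest)) (hns : ¬ IsSimpleP (m1 :: m2 :: rest))
    (h2 : 2 ≤ m1) : 2 ≤ m2 := by
  obtain ⟨-, hsort, hpos⟩ := hm
  by_contra! hm2
  refine hns ⟨List.cons_ne_nil _ _, h2, fun x hx => ?_⟩
  have hxm2 : x ≤ m2 := by
    rcases List.mem_cons.1 hx with rfl | hx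
    exacts [le_rfl, (List.pairwise_cons.1 (List.pairwise_cons.1 hsort).2).1 x hx]
  have := hpos x (List.mem_cons_of_mem _ hx)
  omega

theorem simpStep_cons_cons_of_two_le {m1 m2 : ℕ} (rest : List ℕ) (h2 : 2 ≤ m2) :
    simpStep (m1 :: m2 :: rest) =
      if m1 = m2 then m2 :: rest
      else if m2 < m1 - m2 then (m1 - m2) :: m2 :: rest
      else insertDesc (m1 - m2) (m2 :: rest) := by
  rw [simpStep, if_neg]
  simp only [List.tail_cons, List.forall_mem_cons, not_and]
  omega

theorem IsProfileL.simpStep_cons_cons {m1 m2 : ℕ} {rest : List ℕ}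
    (hm : IsProfileL (m1 :: m2 :: rest)) (h2 : 2 ≤ m2) :
    IsProfileL (simpStep (m1 :: m2 :: rest)) ∧ 2 ≤ (simpStep (m1 :: m2 :: rest)).headI ∧
      (simpStep (m1 :: m2 :: rest)).sum < (m1 :: m2 :: rest).sum := by
  obtain ⟨-, hsort, hpos⟩ := hm
  have htail : IsProfileL (m2 :: rest) :=
    ⟨List.cons_ne_nil _ _, hsort.of_cons, fun x hx => hpos x (List.mem_cons_of_mem _ hx)⟩
  have hle : m2 ≤ m1 := (List.pairwise_cons.1 hsort).1 m2 List.mem_cons_self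
  rw [simpStep_cons_cons_of_two_le rest h2]
  split_ifs with heq hbig
  · exact ⟨htail, h2, by simp only [List.sum_cons]; omega⟩
  · exact ⟨htail.cons hbig.le, by simp only [List.headI_cons]; omega,
      by simp only [List.sum_cons]; omega⟩
  · have hins := insertDesc_cons_of_le rest (show m1 - m2 ≤ m2 by omega)
    refine ⟨htail.insertDesc (by omega), by rw [hins]; exact h2, ?_⟩
    simp only [(insertDesc_perm _ _).sum_eq, List.sum_cons]
    omega

theorem IsProfileL.simpStep_of_not_isSimpleP {l : List ℕ} (hl : IsProfileL l)
    (h2 : 2 ≤ l.headI) (hns : ¬ IsSimpleP l) :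
    IsProfileL (simpStep l) ∧ 2 ≤ (simpStep l).headI ∧ (simpStep l).sum < l.sum := by
  match l, hl, h2, hns with
  | [], hl, _, _ => exact absurd rfl hl.1
  | [m1], hl, h2, hns => exact absurd ⟨hl.1, h2, by simp⟩ hns
  | m1 :: m2 :: rest, hl, h2, hns =>
    exact hl.simpStep_cons_cons (hl.two_le_of_not_isSimpleP hns h2)

/-- For every ploidy profile `m` with `m₁ ≥ 2` the
simplification process terminates: after finitely many simplification steps a
simple ploidy profile is reached. -/
theorem simplification_terminates (m : List ℕ) (hm : IsProfileL m)
    (h2 : 2 ≤ m.headI) :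
    ∃ N : ℕ, IsSimpleP (simpStep^[N] m) := by
  induction hs : m.sum using Nat.strong_induction_on generalizing m with
  | _ s ih =>
  by_cases hsimple : IsSimpleP m
  · exact ⟨0, hsimple⟩
  obtain ⟨hm', h2', hlt⟩ := hm.simpStep_of_not_isSimpleP h2 hsimple
  obtain ⟨N, hN⟩ := ih _ (hs ▸ hlt) _ hm' h2' rfl
  exact ⟨N + 1, by rwa [Function.iterate_succ_apply]⟩

end Ploidy
end

section
/- For any ploidy profile m on X and any choice of core network for m (a phylogenetic network realizing the terminal element m_t of sigma(m)), the network N(m) obtained by the traceback through the simplification sequence sigma(m) is a phylogenetic network on X that realizes m. -/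
/-!
Formalization preamble for "Autopolyploidy, allopolyploidy, and phylogenetic
networks with horizontal arcs" (Huber & Maher).

Networks are finite directed multigraphs whose vertices and arcs are (finitely
many) natural numbers; parallel arcs (beads) are allowed, loops are not.
-/

namespace Ploidy

/-!
The traceback is an induction along the simplification sequence, and each of its steps is a
surgery next to the leaves. Path counts from the root obey `P v = ∑ P (src a)` over the in-arcs
`a` of `v`. Outside the few new vertices, which form a set closed under out-arcs and carrying no
cycle, the walks into a vertex are the same before and after the surgery, so path counts are
unchanged there; at the new vertices the recursion gives the new profile. For `α = 0` both cherry
leaves receive `P x₁ = m₂ = m₁`; for `α > m₂` the leaf `x₁` receives `P x₁ + P x₂ = α + m₂`; for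
`0 < α ≤ m₂` the new leaf `y₁` receives `P x_j + P x₁ = α + m₂`, the leaf `y₂` inherits
`P x₁ = m₂`, and the leaf `x_j` carrying `α` disappears.
-/

section Walks

variable {G : Net}

theorem IsWalk.arcs_mem {l : List ℕ} {u v : ℕ} (h : IsWalk G l u v) :
    ∀ a ∈ l, a ∈ G.arcs := by
  induction l generalizing u with
  | nil => simp
  | cons b l ih =>
    rintro a (_ | ⟨_, ha⟩)
    exacts [h.1, ih h.2.2 a ha]

theorem IsWalk.start_mem (hsrc : ∀ a ∈ G.arcs, G.src a ∈ G.verts) {l : List ℕ} {u v : ℕ}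
    (h : IsWalk G l u v) : u ∈ G.verts := by
  cases l with
  | nil => exact h.1 ▸ h.2
  | cons a l => exact h.2.1 ▸ hsrc a h.1

theorem isWalk_append_iff (hsrc : ∀ a ∈ G.arcs, G.src a ∈ G.verts) {p q : List ℕ}
    {u v : ℕ} : IsWalk G (p ++ q) u v ↔ ∃ w, IsWalk G p u w ∧ IsWalk G q w v := by
  induction p generalizing u with
  | nil =>
    refine ⟨fun h => ⟨u, ⟨rfl, h.start_mem hsrc⟩, h⟩, ?_⟩
    rintro ⟨w, ⟨rfl, -⟩, h⟩
    exact h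
  | cons a p ih =>
    simp only [List.cons_append, IsWalk, ih]
    exact ⟨fun ⟨ha, hs, w, hp, hq⟩ => ⟨w, ⟨ha, hs, hp⟩, hq⟩,
      fun ⟨w, ⟨ha, hs, hp⟩, hq⟩ => ⟨ha, hs, w, hp, hq⟩⟩

theorem isWalk_concat_iff (hG : IsPhylo G) {l : List ℕ} {a u v : ℕ} :
    IsWalk G (l ++ [a]) u v ↔ IsWalk G l u (G.src a) ∧ a ∈ G.arcs ∧ G.tgt a = v := by
  rw [isWalk_append_iff hG.src_mem]
  constructor
  · rintro ⟨w, hl, ha, rfl, hv, -⟩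
    exact ⟨hl, ha, hv⟩
  · rintro ⟨hl, ha, rfl⟩
    exact ⟨_, hl, ha, rfl, rfl, hG.tgt_mem a ha⟩

theorem IsWalk.nodup (hG : IsPhylo G) {l : List ℕ} {u v : ℕ} (h : IsWalk G l u v) :
    l.Nodup := by
  induction l generalizing u with
  | nil => exact List.nodup_nil
  | cons a l ih =>
    refine List.nodup_cons.2 ⟨fun ha => ?_, ih h.2.2⟩
    obtain ⟨s, t, rfl⟩ := List.append_of_mem ha
    obtain ⟨_, hs, -, rfl, -⟩ := (isWalk_append_iff hG.src_mem).1 h.2.2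
    exact hG.acyclic _ (a :: s) (List.cons_ne_nil _ _) ⟨h.1, rfl, hs⟩

theorem finite_setOf_isWalk (hG : IsPhylo G) (u v : ℕ) : {l | IsWalk G l u v}.Finite := by
  refine ((List.finite_length_le G.arcs G.arcs.card).image (List.map Subtype.val)).subset ?_
  intro l hl
  have hmem := hl.arcs_mem
  refine ⟨l.attachWith _ hmem, ?_, List.attachWith_map_subtype_val hmem⟩
  rw [Set.mem_ofPred_eq, List.length_attachWith, ← List.toFinset_card_of_nodup (hl.nodup hG)]
  exact Finset.card_le_card fun a ha => hmem a (List.mem_toFinset.1 ha)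

end Walks

section Degrees

def inArcs (G : Net) (v : ℕ) : Finset ℕ := G.arcs.filter fun a => G.tgt a = v

def outArcs (G : Net) (v : ℕ) : Finset ℕ := G.arcs.filter fun a => G.src a = v

variable {G : Net}

theorem mem_inArcs {a v : ℕ} : a ∈ inArcs G v ↔ a ∈ G.arcs ∧ G.tgt a = v :=
  Finset.mem_filter

theorem mem_outArcs {a v : ℕ} : a ∈ outArcs G v ↔ a ∈ G.arcs ∧ G.src a = v :=
  Finset.mem_filter

theorem inDeg_eq_card_inArcs (v : ℕ) : inDeg G v = (inArcs G v).card := rfl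

theorem outDeg_eq_card_outArcs (v : ℕ) : outDeg G v = (outArcs G v).card := rfl

theorem isLeafN_congr {G' : Net} {w : ℕ} (hv : w ∈ G'.verts ↔ w ∈ G.verts)
    (hin : inDeg G' w = inDeg G w) (hout : outDeg G' w = outDeg G w) :
    IsLeafN G' w ↔ IsLeafN G w := by
  simp only [IsLeafN, hv, hin, hout]

theorem IsLeafN.src_ne {v : ℕ} (hv : IsLeafN G v) : ∀ a ∈ G.arcs, G.src a ≠ v :=
  fun a ha hs =>
    Finset.notMem_empty a (Finset.card_eq_zero.1 hv.2.2 ▸ mem_outArcs.2 ⟨ha, hs⟩)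

theorem IsLeafN.inArcs_eq {v a : ℕ} (hv : IsLeafN G v) (ha : a ∈ G.arcs)
    (hta : G.tgt a = v) : inArcs G v = {a} := by
  obtain ⟨_, hb⟩ := Finset.card_eq_one.1 hv.2.1
  rwa [Finset.eq_singleton_iff_unique_mem.1 hb |>.2 a (mem_inArcs.2 ⟨ha, hta⟩)]

theorem outArcs_eq_empty (hG : IsPhylo G) {v : ℕ} (hv : v ∉ G.verts) :
    outArcs G v = ∅ :=
  Finset.eq_empty_of_forall_notMem fun a ha =>
    hv (mem_outArcs.1 ha |>.2 ▸ hG.src_mem a (mem_outArcs.1 ha).1)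

theorem isLeafN_of_arcs {v a : ℕ} (hv : v ∈ G.verts) (hin : inArcs G v = {a})
    (hout : outArcs G v = ∅) : IsLeafN G v :=
  ⟨hv, by rw [inDeg_eq_card_inArcs, hin, Finset.card_singleton],
    by rw [outDeg_eq_card_outArcs, hout, Finset.card_empty]⟩

theorem IsLeafN.eq_of_tgt_eq {v a : ℕ} (hv : IsLeafN G v) (ha : a ∈ G.arcs)
    (hta : G.tgt a = v) : ∀ b ∈ G.arcs, G.tgt b = v → b = a := fun _ hb htb =>
  Finset.mem_singleton.1 (hv.inArcs_eq ha hta ▸ mem_inArcs.2 ⟨hb, htb⟩)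

theorem not_isLeafN_of_outArcs {v : ℕ} (h : (outArcs G v).Nonempty) :
    ¬ IsLeafN G v := fun hv =>
  h.ne_empty (Finset.card_eq_zero.1 hv.2.2)

theorem IsRootN.ne_of_isLeafN {r v : ℕ} (hr : IsRootN G r) (hv : IsLeafN G v) :
    r ≠ v := by
  rintro rfl
  exact absurd (hv.2.1 ▸ hr.2) one_ne_zero

end Degrees

section PathCounting

variable {G : Net}

theorem nPaths_eq_sum_inArcs (hG : IsPhylo G) {u v : ℕ} (huv : u ≠ v) :
    nPaths G u v = ∑ a ∈ inArcs G v, nPaths G u (G.src a) := by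
  have hfin := finite_setOf_isWalk hG u
  have hinj (a : ℕ) : Function.Injective fun l : List ℕ => l ++ [a] :=
    fun _ _ h => List.append_cancel_right h
  simp only [nPaths, Set.ncard_eq_toFinset_card _ (hfin _)]
  rw [← Finset.sum_congr rfl fun a _ => Finset.card_image_of_injective _ (hinj a),
    ← Finset.card_biUnion]
  · congr 1
    ext l
    simp only [Set.Finite.mem_toFinset, Set.mem_ofPred_eq, Finset.mem_biUnion,
      Finset.mem_image, mem_inArcs]
    constructor
    · intro hl
      obtain rfl | ⟨l', a, rfl⟩ := List.eq_nil_or_concat l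
      · exact absurd hl.1 huv
      · obtain ⟨hl', ha, hta⟩ := (isWalk_concat_iff hG).1 (List.concat_eq_append ▸ hl)
        exact ⟨a, ⟨ha, hta⟩, l', hl', List.concat_eq_append.symm⟩
    · rintro ⟨a, ⟨ha, hta⟩, l', hl', rfl⟩
      exact (isWalk_concat_iff hG).2 ⟨hl', ha, hta⟩
  · intro a _ b _ hab
    simp only [Function.onFun, Finset.disjoint_left, Finset.mem_image]
    rintro _ ⟨l, -, rfl⟩ ⟨l', -, he⟩
    exact hab (List.singleton_inj.1 (List.append_inj_right' he rfl)).symm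

theorem nPaths_of_inArcs_eq_singleton (hG : IsPhylo G) {u v e : ℕ} (huv : u ≠ v)
    (he : inArcs G v = {e}) : nPaths G u v = nPaths G u (G.src e) := by
  rw [nPaths_eq_sum_inArcs hG huv, he, Finset.sum_singleton]

theorem nPaths_of_inArcs_eq_pair (hG : IsPhylo G) {u v e f : ℕ} (huv : u ≠ v) (hef : e ≠ f)
    (he : inArcs G v = {e, f}) :
    nPaths G u v = nPaths G u (G.src e) + nPaths G u (G.src f) := by
  rw [nPaths_eq_sum_inArcs hG huv, he, Finset.sum_pair hef]

end PathCounting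

section Surgery

/-- The rank `ρ` increasing along the arcs leaving `R` is what rules out cycles inside `R`. -/
structure AgreesOutside (G G' : Net) (R : Set ℕ) (ρ : ℕ → ℕ) : Prop where
  keep : ∀ a ∈ G'.arcs, G'.tgt a ∉ R →
    a ∈ G.arcs ∧ G'.src a = G.src a ∧ G'.tgt a = G.tgt a
  closed : ∀ a ∈ G'.arcs, G'.src a ∈ R → G'.tgt a ∈ R ∧ ρ (G'.src a) < ρ (G'.tgt a)

namespace AgreesOutside

variable {G G' : Net} {R : Set ℕ} {ρ : ℕ → ℕ}

theorem mem_of_isWalk (h : AgreesOutside G G' R ρ) {l : List ℕ} {x w : ℕ}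
    (hl : IsWalk G' l x w) (hx : x ∈ R) : w ∈ R ∧ ρ x ≤ ρ w := by
  induction l generalizing x with
  | nil => exact hl.1 ▸ ⟨hx, le_rfl⟩
  | cons a l ih =>
    obtain ⟨ha, rfl, hl⟩ := hl
    obtain ⟨htR, hlt⟩ := h.closed a ha hx
    obtain ⟨hwR, hle⟩ := ih hl htR
    exact ⟨hwR, by omega⟩

theorem isWalk_of_isWalk (h : AgreesOutside G G' R ρ) {l : List ℕ} {x w : ℕ}
    (hl : IsWalk G' l x w) (hwR : w ∉ R) (hwG : w ∈ G.verts) : IsWalk G l x w := by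
  induction l generalizing x with
  | nil => exact ⟨hl.1, hl.1 ▸ hwG⟩
  | cons a l ih =>
    obtain ⟨ha, rfl, hl⟩ := hl
    obtain ⟨haG, hs, ht⟩ := h.keep a ha fun htR => hwR (h.mem_of_isWalk hl htR).1
    exact ⟨haG, hs.symm, ht ▸ ih hl⟩

theorem acyclic (h : AgreesOutside G G' R ρ) (hG : IsPhylo G) :
    ∀ (v : ℕ) (l : List ℕ), l ≠ [] → ¬ IsWalk G' l v v := by
  intro v l hl hw
  obtain ⟨a, l, rfl⟩ := List.exists_cons_of_ne_nil hl
  obtain ⟨ha, rfl, hw⟩ := hw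
  by_cases hv : G'.src a ∈ R
  · obtain ⟨htR, hlt⟩ := h.closed a ha hv
    have := (h.mem_of_isWalk hw htR).2
    omega
  · obtain ⟨haG, hs, ht⟩ := h.keep a ha fun htR => hv (h.mem_of_isWalk hw htR).1
    refine hG.acyclic _ (a :: l) (List.cons_ne_nil _ _) ⟨haG, hs.symm, ?_⟩
    exact ht ▸ h.isWalk_of_isWalk hw hv (hs ▸ hG.src_mem a haG)

theorem isWalk_iff (h : AgreesOutside G G' R ρ) {D : Set ℕ}
    (hlost : ∀ a ∈ G.arcs, G.tgt a ∉ D →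
      a ∈ G'.arcs ∧ G'.src a = G.src a ∧ G'.tgt a = G.tgt a)
    (hsink : ∀ a ∈ G.arcs, G.src a ∉ D) {w : ℕ} (hwG : w ∈ G.verts)
    (hwG' : w ∈ G'.verts) (hwR : w ∉ R) (hwD : w ∉ D) {l : List ℕ} {u : ℕ} :
    IsWalk G' l u w ↔ IsWalk G l u w := by
  refine ⟨fun hl => h.isWalk_of_isWalk hl hwR hwG, fun hl => ?_⟩
  induction l generalizing u with
  | nil => exact ⟨hl.1, hl.1 ▸ hwG'⟩
  | cons a l ih =>
    obtain ⟨ha, rfl, hl⟩ := hl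
    by_cases htD : G.tgt a ∈ D
    · cases l with
      | nil => exact absurd (hl.1 ▸ htD) hwD
      | cons b l => exact absurd (hl.2.1 ▸ htD) (hsink b hl.1)
    · obtain ⟨ha', hs, ht⟩ := hlost a ha htD
      exact ⟨ha', hs, ht ▸ ih hl⟩

theorem nPaths_eq (h : AgreesOutside G G' R ρ) {D : Set ℕ}
    (hlost : ∀ a ∈ G.arcs, G.tgt a ∉ D →
      a ∈ G'.arcs ∧ G'.src a = G.src a ∧ G'.tgt a = G.tgt a)
    (hsink : ∀ a ∈ G.arcs, G.src a ∉ D) {w : ℕ} (hwG : w ∈ G.verts)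
    (hwG' : w ∈ G'.verts) (hwR : w ∉ R) (hwD : w ∉ D) (u : ℕ) :
    nPaths G' u w = nPaths G u w := by
  unfold nPaths
  congr 1
  ext l
  exact h.isWalk_iff hlost hsink hwG hwG' hwR hwD

end AgreesOutside

structure DegreeCompatible (G G' : Net) : Prop where
  old : ∀ w ∈ G'.verts, w ∈ G.verts → inDeg G' w = inDeg G w ∧
    (outDeg G' w = outDeg G w ∨ IsLeafN G w ∧ outDeg G' w = 2)
  new : ∀ w ∈ G'.verts, w ∉ G.verts → IsLeafN G' w ∨ IsTreeVert G' w ∨ IsReticN G' w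
  root_mem : ∀ r, IsRootN G r → r ∈ G'.verts

namespace DegreeCompatible

variable {G G' : Net}

theorem isRootN_iff (h : DegreeCompatible G G') (r : ℕ) : IsRootN G' r ↔ IsRootN G r := by
  constructor
  · rintro ⟨hr', h0⟩
    by_cases hr : r ∈ G.verts
    · exact ⟨hr, (h.old r hr' hr).1 ▸ h0⟩
    · rcases h.new r hr' hr with h' | h' | h' <;> exact absurd (h'.2.1 ▸ h0) (by decide)
  · intro hr
    exact ⟨h.root_mem r hr, ((h.old r (h.root_mem r hr) hr.1).1).trans hr.2⟩

theorem isPhylo (h : DegreeCompatible G G') (hG : IsPhylo G)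
    (hsrc : ∀ a ∈ G'.arcs, G'.src a ∈ G'.verts)
    (htgt : ∀ a ∈ G'.arcs, G'.tgt a ∈ G'.verts)
    (hloop : ∀ a ∈ G'.arcs, G'.src a ≠ G'.tgt a)
    (hacyc : ∀ (v : ℕ) (l : List ℕ), l ≠ [] → ¬ IsWalk G' l v v) : IsPhylo G' := by
  refine ⟨hsrc, htgt, hloop, hacyc, ?_, ?_, ?_⟩
  · obtain ⟨r, hr, huniq⟩ := hG.root_exu
    exact ⟨r, (h.isRootN_iff r).2 hr, fun r' hr' => huniq r' ((h.isRootN_iff r').1 hr')⟩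
  · intro r hr
    have hrG := (h.isRootN_iff r).1 hr
    rcases (h.old r hr.1 hrG.1).2 with hout | ⟨hleaf, -⟩
    · exact hout ▸ hG.root_out r hrG
    · exact absurd (hleaf.2.1 ▸ hrG.2) one_ne_zero
  · intro w hw
    by_cases hwG : w ∈ G.verts
    · obtain ⟨hin, hout | ⟨hleaf, hout⟩⟩ := h.old w hw hwG
      · simpa only [IsRootN, IsLeafN, IsTreeVert, IsReticN, hw, hwG, hin, hout, true_and]
          using hG.types w hwG
      · exact Or.inr (Or.inr (Or.inl ⟨hw, hin.trans hleaf.2.1, hout⟩))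
    · exact Or.inr (h.new w hw hwG)

end DegreeCompatible

end Surgery

section LeafList

def leafList (R : LNet) (n : ℕ) : List ℕ := (List.range n).map R.leaf

theorem map_leafList_eq_iff {R : LNet} {f : ℕ → ℕ} {m : List ℕ} :
    (leafList R m.length).map f = m ↔ ∀ i < m.length, f (R.leaf i) = m.getD i 0 := by
  rw [List.ext_getElem_iff]
  simp only [leafList, List.length_map, List.length_range, List.getElem_map, List.getElem_range,
    true_and]
  refine forall₂_congr fun i hi => ?_
  rw [List.getD_eq_getElem _ _ hi]
  exact ⟨fun h => h hi, fun h _ => h⟩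

theorem realizesL_iff {R : LNet} {m : List ℕ} : RealizesL R m ↔
    IsPhylo R.net ∧ (leafList R m.length).Nodup ∧
      (∀ v, IsLeafN R.net v ↔ v ∈ leafList R m.length) ∧
      ∀ r, IsRootN R.net r → (leafList R m.length).map (nPaths R.net r) = m := by
  simp only [RealizesL, map_leafList_eq_iff]
  simp only [leafList, List.nodup_map_iff_inj_on List.nodup_range, List.mem_map, List.mem_range]
  constructor
  · rintro ⟨hG, hleaf, hinj, hsurj, hcount⟩
    refine ⟨hG, fun i hi j hj => hinj i j hi hj, fun v => ⟨hsurj v, ?_⟩,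
      fun r hr i hi => hcount i hi r hr⟩
    rintro ⟨i, hi, rfl⟩
    exact hleaf i hi
  · rintro ⟨hG, hinj, hleaf, hcount⟩
    exact ⟨hG, fun i hi => (hleaf _).2 ⟨i, hi, rfl⟩, fun i j hi hj => hinj i hi j hj,
      fun v => (hleaf v).1, fun i hi r hr => hcount r hr i hi⟩

theorem leafList_add_one (R : LNet) (n : ℕ) :
    leafList R (n + 1) = R.leaf 0 :: (List.range n).map fun i => R.leaf (i + 1) := by
  simp [leafList, List.range_succ_eq_map, Function.comp_def]

theorem leafList_add_two (R : LNet) (n : ℕ) :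
    leafList R (n + 2) = R.leaf 0 :: R.leaf 1 :: (List.range n).map fun i => R.leaf (i + 2) := by
  simp [leafList, List.range_succ_eq_map, Function.comp_def]

theorem leafList_add (R : LNet) (k n : ℕ) :
    leafList R (k + n) = leafList R k ++ (List.range n).map fun i => R.leaf (k + i) := by
  simp [leafList, List.range_add, Function.comp_def]

theorem leafList_add_two_add (R : LNet) (k n : ℕ) :
    leafList R (k + 2 + n) = R.leaf 0 :: ((List.range k).map fun i => R.leaf (i + 1)) ++
      R.leaf (k + 1) :: (List.range n).map fun i => R.leaf (k + 2 + i) := by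
  rw [leafList_add, show k + 2 = k + 1 + 1 from rfl, leafList, List.range_succ, List.map_append,
    ← leafList, leafList_add_one]
  simp

end LeafList

section CherryExpand

/-- `CherryExpandOp` on the underlying networks; `x` is the leaf that becomes the parent of
the cherry `{y1, y2}`. -/
structure IsCherryExpand (G G' : Net) (x y1 y2 b1 b2 : ℕ) : Prop where
  y1_fresh : y1 ∉ G.verts
  y2_fresh : y2 ∉ G.verts
  y1_ne_y2 : y1 ≠ y2
  b1_fresh : b1 ∉ G.arcs
  b2_fresh : b2 ∉ G.arcs
  b1_ne_b2 : b1 ≠ b2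
  verts_eq : G'.verts = G.verts ∪ {y1, y2}
  arcs_eq : G'.arcs = G.arcs ∪ {b1, b2}
  old : ∀ a ∈ G.arcs, G'.src a = G.src a ∧ G'.tgt a = G.tgt a
  src_b1 : G'.src b1 = x
  tgt_b1 : G'.tgt b1 = y1
  src_b2 : G'.src b2 = x
  tgt_b2 : G'.tgt b2 = y2

namespace IsCherryExpand

variable {G G' : Net} {x y1 y2 b1 b2 : ℕ} (h : IsCherryExpand G G' x y1 y2 b1 b2)
  (hG : IsPhylo G) (hx : IsLeafN G x)
include h

theorem mem_verts {w : ℕ} : w ∈ G'.verts ↔ w ∈ G.verts ∨ w = y1 ∨ w = y2 := by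
  simp only [h.verts_eq, Finset.mem_union, Finset.mem_insert, Finset.mem_singleton]

include hx in
theorem outArcs_x : outArcs G' x = {b1, b2} := by
  ext a
  have := hx.src_ne
  cases h
  grind [mem_outArcs]

include hG

theorem inArcs_y1 : inArcs G' y1 = {b1} := by
  ext a
  have := hG.tgt_mem
  cases h
  grind [mem_inArcs]

theorem inArcs_y2 : inArcs G' y2 = {b2} := by
  ext a
  have := hG.tgt_mem
  cases h
  grind [mem_inArcs]

theorem inArcs_of_mem {w : ℕ} (hw : w ∈ G.verts) : inArcs G' w = inArcs G w := by
  ext a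
  have := hG.tgt_mem
  cases h
  grind [mem_inArcs]

theorem outArcs_of_ne {w : ℕ} (hwx : w ≠ x) : outArcs G' w = outArcs G w := by
  ext a
  have := hG.src_mem
  cases h
  grind [mem_outArcs]

include hx

theorem isLeafN_y1 : IsLeafN G' y1 :=
  isLeafN_of_arcs (h.mem_verts.2 (Or.inr (Or.inl rfl))) (h.inArcs_y1 hG)
    (by rw [h.outArcs_of_ne hG (ne_of_mem_of_not_mem hx.1 h.y1_fresh).symm,
      outArcs_eq_empty hG h.y1_fresh])

theorem isLeafN_y2 : IsLeafN G' y2 :=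
  isLeafN_of_arcs (h.mem_verts.2 (Or.inr (Or.inr rfl))) (h.inArcs_y2 hG)
    (by rw [h.outArcs_of_ne hG (ne_of_mem_of_not_mem hx.1 h.y2_fresh).symm,
      outArcs_eq_empty hG h.y2_fresh])

theorem agreesOutside : AgreesOutside G G' {y1, y2} fun _ => 0 := by
  have := hG.src_mem
  have := hx.1
  cases h
  constructor <;> grind

theorem degreeCompatible : DegreeCompatible G G' where
  old w _ hwG := by
    refine ⟨congrArg Finset.card (h.inArcs_of_mem hG hwG), ?_⟩
    by_cases hwx : w = x
    · subst hwx
      exact Or.inr ⟨hx, by rw [outDeg_eq_card_outArcs, h.outArcs_x hx,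
        Finset.card_pair h.b1_ne_b2]⟩
    · exact Or.inl (congrArg Finset.card (h.outArcs_of_ne hG hwx))
  new w hw hwG := by
    rcases h.mem_verts.1 hw with hw | rfl | rfl
    exacts [absurd hw hwG, Or.inl (h.isLeafN_y1 hG hx), Or.inl (h.isLeafN_y2 hG hx)]
  root_mem r hr := h.mem_verts.2 (Or.inl hr.1)

theorem isPhylo : IsPhylo G' := by
  refine (h.degreeCompatible hG hx).isPhylo hG ?_ ?_ ?_ ((h.agreesOutside hG hx).acyclic hG)
  · have := hG.src_mem; have := hx.1; cases h; grind
  · have := hG.tgt_mem; cases h; grind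
  · have := hG.no_loop; have := hG.src_mem; have := hx.1; cases h; grind

theorem isLeafN_iff {w : ℕ} : IsLeafN G' w ↔ w = y1 ∨ w = y2 ∨ IsLeafN G w ∧ w ≠ x := by
  by_cases hwG : w ∈ G.verts
  · have hy1 := ne_of_mem_of_not_mem hwG h.y1_fresh
    have hy2 := ne_of_mem_of_not_mem hwG h.y2_fresh
    by_cases hwx : w = x
    · subst hwx
      simp only [hy1, hy2, ne_eq, not_true_eq_false, and_false, or_self, iff_false]
      exact not_isLeafN_of_outArcs (by simp [h.outArcs_x hx])
    · rw [isLeafN_congr (by simp [h.mem_verts, hwG]) (congrArg Finset.card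
        (h.inArcs_of_mem hG hwG)) (congrArg Finset.card (h.outArcs_of_ne hG hwx))]
      simp [hy1, hy2, hwx]
  · refine ⟨fun hl => ?_, ?_⟩
    · rcases h.mem_verts.1 hl.1 with hw | hw | hw
      exacts [absurd hw hwG, Or.inl hw, Or.inr (Or.inl hw)]
    · rintro (rfl | rfl | ⟨hl, -⟩)
      exacts [h.isLeafN_y1 hG hx, h.isLeafN_y2 hG hx, absurd hl.1 hwG]

theorem nPaths_of_mem {w : ℕ} (hw : w ∈ G.verts) (u : ℕ) : nPaths G' u w = nPaths G u w :=
  (h.agreesOutside hG hx).nPaths_eq (D := ∅)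
    (fun a ha _ => ⟨by simp [h.arcs_eq, ha], h.old a ha⟩)
    (fun _ _ => Set.notMem_empty _) hw (h.mem_verts.2 (Or.inl hw))
    (by rintro (rfl | rfl); exacts [h.y1_fresh hw, h.y2_fresh hw]) (Set.notMem_empty w) u

theorem nPaths_y1 {r : ℕ} (hr : r ∈ G.verts) : nPaths G' r y1 = nPaths G r x := by
  rw [nPaths_of_inArcs_eq_singleton (h.isPhylo hG hx) (ne_of_mem_of_not_mem hr h.y1_fresh)
    (h.inArcs_y1 hG), h.src_b1, h.nPaths_of_mem hG hx hx.1]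

theorem nPaths_y2 {r : ℕ} (hr : r ∈ G.verts) : nPaths G' r y2 = nPaths G r x := by
  rw [nPaths_of_inArcs_eq_singleton (h.isPhylo hG hx) (ne_of_mem_of_not_mem hr h.y2_fresh)
    (h.inArcs_y2 hG), h.src_b2, h.nPaths_of_mem hG hx hx.1]

end IsCherryExpand

theorem CherryExpandOp.realizesL {R'' R' : LNet} {k : ℕ} {s : List ℕ}
    (hR : RealizesL R'' (k :: s)) (hop : CherryExpandOp R'' R') :
    RealizesL R' (k :: k :: s) := by
  obtain ⟨y1, y2, b1, b2, hy1, hy2, hy, hb1, hb2, hb, hV, hA, hold, hs1, ht1, hs2, ht2,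
    hl0, hl1, hl⟩ := hop
  have h : IsCherryExpand R''.net R'.net (R''.leaf 0) y1 y2 b1 b2 :=
    ⟨hy1, hy2, hy, hb1, hb2, hb, hV, hA, hold, hs1, ht1, hs2, ht2⟩
  set L := (List.range s.length).map fun i => R''.leaf (i + 1)
  have hL' : leafList R' (k :: k :: s).length = y1 :: y2 :: L := by
    rw [List.length_cons, List.length_cons, leafList_add_two, hl0, hl1]
    exact congrArg _ (congrArg _ (List.map_congr_left fun i _ => hl (i + 1) (by omega)))
  have hL'' : leafList R'' (k :: s).length = R''.leaf 0 :: L := leafList_add_one _ _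
  rw [realizesL_iff, hL''] at hR
  rw [realizesL_iff, hL']
  obtain ⟨hG, hnd, hleaf, hcount⟩ := hR
  have hx : IsLeafN R''.net (R''.leaf 0) := (hleaf _).2 List.mem_cons_self
  have hxL := (List.nodup_cons.1 hnd).1
  have hLv : ∀ v ∈ L, v ∈ R''.net.verts := fun v hv =>
    ((hleaf v).2 (List.mem_cons_of_mem _ hv)).1
  refine ⟨h.isPhylo hG hx, ?_, fun v => ?_, fun r hr => ?_⟩
  · simp only [List.nodup_cons, List.mem_cons, not_or]
    exact ⟨⟨hy, fun hv => hy1 (hLv _ hv)⟩, fun hv => hy2 (hLv _ hv),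
      (List.nodup_cons.1 hnd).2⟩
  · rw [h.isLeafN_iff hG hx, hleaf]
    by_cases hv : v = R''.leaf 0
    · subst hv
      simp [hxL, ne_of_mem_of_not_mem hx.1 hy1, ne_of_mem_of_not_mem hx.1 hy2]
    · simp [hv]
  · have hrG := ((h.degreeCompatible hG hx).isRootN_iff r).1 hr
    have hc := hcount r hrG
    simp only [List.map_cons, List.cons.injEq] at hc ⊢
    rw [h.nPaths_y1 hG hx hrG.1, h.nPaths_y2 hG hx hrG.1, hc.1, ← hc.2,
      List.map_congr_left fun v hv => h.nPaths_of_mem hG hx (hLv v hv) r]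
    simp

end CherryExpand

section AddArc

/-- `AddArcOp` on the underlying networks; `x0, x1` are the leaves whose in-arcs `a0, a1`
are subdivided by `u, v`. -/
structure IsAddArc (G G' : Net) (x0 x1 u v a0 a1 b0 b1 c : ℕ) : Prop where
  u_fresh : u ∉ G.verts
  v_fresh : v ∉ G.verts
  u_ne_v : u ≠ v
  a0_mem : a0 ∈ G.arcs
  old_tgt_a0 : G.tgt a0 = x0
  a1_mem : a1 ∈ G.arcs
  old_tgt_a1 : G.tgt a1 = x1
  a0_ne_a1 : a0 ≠ a1
  b0_fresh : b0 ∉ G.arcs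
  b1_fresh : b1 ∉ G.arcs
  c_fresh : c ∉ G.arcs
  b0_ne_b1 : b0 ≠ b1
  b0_ne_c : b0 ≠ c
  b1_ne_c : b1 ≠ c
  verts_eq : G'.verts = G.verts ∪ {u, v}
  arcs_eq : G'.arcs = G.arcs ∪ {b0, b1, c}
  old : ∀ a ∈ G.arcs, a ≠ a0 → a ≠ a1 → G'.src a = G.src a ∧ G'.tgt a = G.tgt a
  src_a0 : G'.src a0 = G.src a0
  tgt_a0 : G'.tgt a0 = u
  src_a1 : G'.src a1 = G.src a1
  tgt_a1 : G'.tgt a1 = v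
  src_b0 : G'.src b0 = u
  tgt_b0 : G'.tgt b0 = x0
  src_b1 : G'.src b1 = v
  tgt_b1 : G'.tgt b1 = x1
  src_c : G'.src c = v
  tgt_c : G'.tgt c = u

namespace IsAddArc

variable {G G' : Net} {x0 x1 u v a0 a1 b0 b1 c : ℕ}
  (h : IsAddArc G G' x0 x1 u v a0 a1 b0 b1 c) (hG : IsPhylo G) (hx0 : IsLeafN G x0)
  (hx1 : IsLeafN G x1)
include h

theorem mem_verts {w : ℕ} : w ∈ G'.verts ↔ w ∈ G.verts ∨ w = u ∨ w = v := by
  simp only [h.verts_eq, Finset.mem_union, Finset.mem_insert, Finset.mem_singleton]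

include hG

theorem inArcs_u : inArcs G' u = {a0, c} := by
  ext a
  have := hG.tgt_mem
  cases h
  grind [mem_inArcs]

theorem inArcs_v : inArcs G' v = {a1} := by
  ext a
  have := hG.tgt_mem
  cases h
  grind [mem_inArcs]

include hx0 in
theorem inArcs_x0 : inArcs G' x0 = {b0} := by
  ext a
  have := hG.tgt_mem
  have := hx0.eq_of_tgt_eq h.a0_mem h.old_tgt_a0
  cases h
  grind [mem_inArcs]

include hx1 in
theorem inArcs_x1 : inArcs G' x1 = {b1} := by
  ext a
  have := hG.tgt_mem
  have := hx1.eq_of_tgt_eq h.a1_mem h.old_tgt_a1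
  cases h
  grind [mem_inArcs]

theorem inArcs_of_ne {w : ℕ} (hw : w ∈ G.verts) (hw0 : w ≠ x0) (hw1 : w ≠ x1) :
    inArcs G' w = inArcs G w := by
  ext a
  have := hG.tgt_mem
  cases h
  grind [mem_inArcs]

theorem outArcs_u : outArcs G' u = {b0} := by
  ext a
  have := hG.src_mem
  cases h
  grind [mem_outArcs]

theorem outArcs_v : outArcs G' v = {b1, c} := by
  ext a
  have := hG.src_mem
  cases h
  grind [mem_outArcs]

theorem outArcs_of_mem {w : ℕ} (hw : w ∈ G.verts) : outArcs G' w = outArcs G w := by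
  ext a
  have := hG.src_mem
  cases h
  grind [mem_outArcs]

include hx0 hx1

theorem inDeg_of_mem {w : ℕ} (hw : w ∈ G.verts) : inDeg G' w = inDeg G w := by
  simp only [inDeg_eq_card_inArcs]
  by_cases hw0 : w = x0
  · rw [hw0, h.inArcs_x0 hG hx0, hx0.inArcs_eq h.a0_mem h.old_tgt_a0, Finset.card_singleton,
      Finset.card_singleton]
  by_cases hw1 : w = x1
  · rw [hw1, h.inArcs_x1 hG hx1, hx1.inArcs_eq h.a1_mem h.old_tgt_a1, Finset.card_singleton,
      Finset.card_singleton]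
  rw [h.inArcs_of_ne hG hw hw0 hw1]

theorem degreeCompatible : DegreeCompatible G G' where
  old w _ hwG := ⟨h.inDeg_of_mem hG hx0 hx1 hwG,
    Or.inl (congrArg Finset.card (h.outArcs_of_mem hG hwG))⟩
  new w hw hwG := by
    rcases h.mem_verts.1 hw with hw | rfl | rfl
    · exact absurd hw hwG
    · refine Or.inr (Or.inr ⟨hw, ?_, ?_⟩)
      · rw [inDeg_eq_card_inArcs, h.inArcs_u hG, Finset.card_pair
        (ne_of_mem_of_not_mem h.a0_mem h.c_fresh)]
      · rw [outDeg_eq_card_outArcs, h.outArcs_u hG, Finset.card_singleton]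
    · refine Or.inr (Or.inl ⟨hw, ?_, ?_⟩)
      · rw [inDeg_eq_card_inArcs, h.inArcs_v hG, Finset.card_singleton]
      · rw [outDeg_eq_card_outArcs, h.outArcs_v hG, Finset.card_pair h.b1_ne_c]
  root_mem r hr := h.mem_verts.2 (Or.inl hr.1)

/-- The new arcs run `v → u → x₀` and `v → x₁`, so this rank increases along them. -/
theorem agreesOutside :
    AgreesOutside G G' {u, v, x0, x1} fun w => if w = v then 0 else if w = u then 1 else 2 := by
  have := hG.src_mem
  have := hx0.src_ne
  have := hx1.src_ne
  have := hx0.1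
  have := hx1.1
  cases h
  constructor <;> grind

theorem isPhylo : IsPhylo G' := by
  refine (h.degreeCompatible hG hx0 hx1).isPhylo hG ?_ ?_ ?_
    ((h.agreesOutside hG hx0 hx1).acyclic hG)
  · have := hG.src_mem; cases h; grind
  · have := hG.tgt_mem; have := hx0.1; have := hx1.1; cases h; grind
  · have := hG.no_loop; have := hG.src_mem; have := hx0.1; have := hx1.1; cases h; grind

theorem isLeafN_iff {w : ℕ} : IsLeafN G' w ↔ IsLeafN G w := by
  by_cases hwG : w ∈ G.verts
  · exact isLeafN_congr (by simp [h.mem_verts, hwG]) (h.inDeg_of_mem hG hx0 hx1 hwG)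
      (congrArg Finset.card (h.outArcs_of_mem hG hwG))
  · refine ⟨fun hl => ?_, fun hl => absurd hl.1 hwG⟩
    rcases h.mem_verts.1 hl.1 with hw | rfl | rfl
    · exact absurd hw hwG
    · exact absurd hl (not_isLeafN_of_outArcs (by simp [h.outArcs_u hG]))
    · exact absurd hl (not_isLeafN_of_outArcs (by simp [h.outArcs_v hG]))

theorem nPaths_of_ne {w : ℕ} (hw : w ∈ G.verts) (hw0 : w ≠ x0) (hw1 : w ≠ x1) (r : ℕ) :
    nPaths G' r w = nPaths G r w := by
  refine (h.agreesOutside hG hx0 hx1).nPaths_eq (D := {x0, x1}) (fun a ha hD => ?_) ?_ hw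
    (h.mem_verts.2 (Or.inl hw)) ?_ (by simp [hw0, hw1]) r
  · cases h
    grind
  · rintro a ha (e | e)
    exacts [hx0.src_ne a ha e, hx1.src_ne a ha e]
  · simp [hw0, hw1, ne_of_mem_of_not_mem hw h.u_fresh, ne_of_mem_of_not_mem hw h.v_fresh]

theorem nPaths_v {r : ℕ} (hr : r ∈ G.verts) : nPaths G' r v = nPaths G r (G.src a1) := by
  rw [nPaths_of_inArcs_eq_singleton (h.isPhylo hG hx0 hx1) (ne_of_mem_of_not_mem hr h.v_fresh)
    (h.inArcs_v hG), h.src_a1, h.nPaths_of_ne hG hx0 hx1 (hG.src_mem a1 h.a1_mem)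
    (hx0.src_ne a1 h.a1_mem) (hx1.src_ne a1 h.a1_mem)]

theorem nPaths_u {r : ℕ} (hr : r ∈ G.verts) :
    nPaths G' r u = nPaths G r (G.src a0) + nPaths G r (G.src a1) := by
  rw [nPaths_of_inArcs_eq_pair (h.isPhylo hG hx0 hx1) (ne_of_mem_of_not_mem hr h.u_fresh)
    (ne_of_mem_of_not_mem h.a0_mem h.c_fresh) (h.inArcs_u hG), h.src_a0, h.src_c,
    h.nPaths_v hG hx0 hx1 hr, h.nPaths_of_ne hG hx0 hx1 (hG.src_mem a0 h.a0_mem)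
    (hx0.src_ne a0 h.a0_mem) (hx1.src_ne a0 h.a0_mem)]

theorem nPaths_x0 {r : ℕ} (hr : IsRootN G r) :
    nPaths G' r x0 = nPaths G r x0 + nPaths G r x1 := by
  rw [nPaths_of_inArcs_eq_singleton (h.isPhylo hG hx0 hx1) (hr.ne_of_isLeafN hx0)
    (h.inArcs_x0 hG hx0), h.src_b0, h.nPaths_u hG hx0 hx1 hr.1,
    nPaths_of_inArcs_eq_singleton hG (hr.ne_of_isLeafN hx0) (hx0.inArcs_eq h.a0_mem h.old_tgt_a0),
    nPaths_of_inArcs_eq_singleton hG (hr.ne_of_isLeafN hx1) (hx1.inArcs_eq h.a1_mem h.old_tgt_a1)]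

theorem nPaths_x1 {r : ℕ} (hr : IsRootN G r) : nPaths G' r x1 = nPaths G r x1 := by
  rw [nPaths_of_inArcs_eq_singleton (h.isPhylo hG hx0 hx1) (hr.ne_of_isLeafN hx1)
    (h.inArcs_x1 hG hx1), h.src_b1, h.nPaths_v hG hx0 hx1 hr.1,
    nPaths_of_inArcs_eq_singleton hG (hr.ne_of_isLeafN hx1) (hx1.inArcs_eq h.a1_mem h.old_tgt_a1)]

end IsAddArc

theorem AddArcOp.realizesL {R'' R' : LNet} {p q : ℕ} {s : List ℕ}
    (hR : RealizesL R'' (p :: q :: s)) (hop : AddArcOp R'' R') :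
    RealizesL R' ((p + q) :: q :: s) := by
  obtain ⟨u, v, a0, a1, b0, b1, c, hu, hv, huv, ha0, hta0, ha1, hta1, ha01, hb0, hb1, hc, hb01,
    hb0c, hb1c, hV, hA, hold, hsa0, hta0', hsa1, hta1', hsb0, htb0, hsb1, htb1, hsc, htc,
    hleaf'⟩ := hop
  have h : IsAddArc R''.net R'.net (R''.leaf 0) (R''.leaf 1) u v a0 a1 b0 b1 c :=
    ⟨hu, hv, huv, ha0, hta0, ha1, hta1, ha01, hb0, hb1, hc, hb01, hb0c, hb1c, hV, hA, hold,
      hsa0, hta0', hsa1, hta1', hsb0, htb0, hsb1, htb1, hsc, htc⟩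
  have hL : leafList R' ((p + q) :: q :: s).length = leafList R'' (p :: q :: s).length := by
    simp only [leafList, List.length_cons, funext hleaf']
  rw [realizesL_iff, List.length_cons, List.length_cons, leafList_add_two] at hR
  rw [realizesL_iff, hL, List.length_cons, List.length_cons, leafList_add_two]
  obtain ⟨hG, hnd, hleaf, hcount⟩ := hR
  have hx0 : IsLeafN R''.net (R''.leaf 0) := (hleaf _).2 (by simp)
  have hx1 : IsLeafN R''.net (R''.leaf 1) := (hleaf _).2 (by simp)
  refine ⟨h.isPhylo hG hx0 hx1, hnd, fun w => (h.isLeafN_iff hG hx0 hx1).trans (hleaf w),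
    fun r hr => ?_⟩
  have hrG := ((h.degreeCompatible hG hx0 hx1).isRootN_iff r).1 hr
  have hc := hcount r hrG
  simp only [List.map_cons, List.cons.injEq] at hc ⊢
  refine ⟨by rw [h.nPaths_x0 hG hx0 hx1 hrG, hc.1, hc.2.1],
    by rw [h.nPaths_x1 hG hx0 hx1 hrG, hc.2.1],
    (List.map_congr_left fun w hw => ?_).trans hc.2.2⟩
  simp only [List.nodup_cons, List.mem_cons, not_or] at hnd
  exact h.nPaths_of_ne hG hx0 hx1 ((hleaf w).2 (by simp [hw])).1 (fun e => hnd.1.2 (e ▸ hw))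
    (fun e => hnd.2.1 (e ▸ hw)) r

end AddArc

section InsertBack

/-- `InsertBackOp` on the underlying networks; `xj` is the deleted leaf, whose in-arc `az` is
redirected to `u`, and `x0` becomes the parent of `u` and of the new leaf `y2`. -/
structure IsInsertBack (G G' : Net) (x0 xj u y1 y2 c1 c2 c3 az : ℕ) : Prop where
  u_fresh : u ∉ G.verts
  y1_fresh : y1 ∉ G.verts
  y2_fresh : y2 ∉ G.verts
  u_ne_y1 : u ≠ y1
  u_ne_y2 : u ≠ y2
  y1_ne_y2 : y1 ≠ y2
  c1_fresh : c1 ∉ G.arcs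
  c2_fresh : c2 ∉ G.arcs
  c3_fresh : c3 ∉ G.arcs
  c1_ne_c2 : c1 ≠ c2
  c1_ne_c3 : c1 ≠ c3
  c2_ne_c3 : c2 ≠ c3
  az_mem : az ∈ G.arcs
  old_tgt_az : G.tgt az = xj
  verts_eq : G'.verts = G.verts.erase xj ∪ {u, y1, y2}
  arcs_eq : G'.arcs = G.arcs ∪ {c1, c2, c3}
  old : ∀ a ∈ G.arcs, a ≠ az → G'.src a = G.src a ∧ G'.tgt a = G.tgt a
  src_az : G'.src az = G.src az
  tgt_az : G'.tgt az = u
  src_c1 : G'.src c1 = x0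
  tgt_c1 : G'.tgt c1 = u
  src_c2 : G'.src c2 = u
  tgt_c2 : G'.tgt c2 = y1
  src_c3 : G'.src c3 = x0
  tgt_c3 : G'.tgt c3 = y2

namespace IsInsertBack

variable {G G' : Net} {x0 xj u y1 y2 c1 c2 c3 az : ℕ}
  (h : IsInsertBack G G' x0 xj u y1 y2 c1 c2 c3 az) (hG : IsPhylo G) (hx0 : IsLeafN G x0)
  (hxj : IsLeafN G xj) (hx0j : x0 ≠ xj)
include h

theorem mem_verts {w : ℕ} :
    w ∈ G'.verts ↔ (w ∈ G.verts ∧ w ≠ xj) ∨ w = u ∨ w = y1 ∨ w = y2 := by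
  simp only [h.verts_eq, Finset.mem_union, Finset.mem_erase, Finset.mem_insert,
    Finset.mem_singleton, and_comm]

include hx0 in
theorem outArcs_x0 : outArcs G' x0 = {c1, c3} := by
  ext a
  have := hx0.src_ne
  have := hx0.1
  cases h
  grind [mem_outArcs]

include hG

theorem inArcs_u : inArcs G' u = {az, c1} := by
  ext a
  have := hG.tgt_mem
  cases h
  grind [mem_inArcs]

theorem inArcs_y1 : inArcs G' y1 = {c2} := by
  ext a
  have := hG.tgt_mem
  cases h
  grind [mem_inArcs]

theorem inArcs_y2 : inArcs G' y2 = {c3} := by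
  ext a
  have := hG.tgt_mem
  cases h
  grind [mem_inArcs]

theorem inArcs_of_ne {w : ℕ} (hw : w ∈ G.verts) (hwj : w ≠ xj) :
    inArcs G' w = inArcs G w := by
  ext a
  have := hG.tgt_mem
  cases h
  grind [mem_inArcs]

theorem outArcs_of_ne {w : ℕ} (hw0 : w ≠ x0) (hwu : w ≠ u) : outArcs G' w = outArcs G w := by
  ext a
  have := hG.src_mem
  cases h
  grind [mem_outArcs]

include hx0

theorem outArcs_u : outArcs G' u = {c2} := by
  ext a
  have := hG.src_mem
  have := hx0.1
  cases h
  grind [mem_outArcs]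

theorem isLeafN_y1 : IsLeafN G' y1 :=
  isLeafN_of_arcs (h.mem_verts.2 (Or.inr (Or.inr (Or.inl rfl)))) (h.inArcs_y1 hG)
    (by rw [h.outArcs_of_ne hG (ne_of_mem_of_not_mem hx0.1 h.y1_fresh).symm h.u_ne_y1.symm,
      outArcs_eq_empty hG h.y1_fresh])

theorem isLeafN_y2 : IsLeafN G' y2 :=
  isLeafN_of_arcs (h.mem_verts.2 (Or.inr (Or.inr (Or.inr rfl)))) (h.inArcs_y2 hG)
    (by rw [h.outArcs_of_ne hG (ne_of_mem_of_not_mem hx0.1 h.y2_fresh).symm h.u_ne_y2.symm,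
      outArcs_eq_empty hG h.y2_fresh])

theorem agreesOutside : AgreesOutside G G' {u, y1, y2} fun w => if w = u then 0 else 1 := by
  have := hG.src_mem
  have := hx0.1
  cases h
  constructor <;> grind

theorem isLeafN_iff {w : ℕ} :
    IsLeafN G' w ↔ w = y1 ∨ w = y2 ∨ IsLeafN G w ∧ w ≠ x0 ∧ w ≠ xj := by
  by_cases hwG : w ∈ G.verts
  · simp only [ne_of_mem_of_not_mem hwG h.y1_fresh, ne_of_mem_of_not_mem hwG h.y2_fresh,
      false_or]
    by_cases hwj : w = xj
    · subst hwj
      simp only [ne_eq, not_true_eq_false, and_false, iff_false]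
      intro hl
      rcases h.mem_verts.1 hl.1 with hw | rfl | rfl | rfl
      exacts [hw.2 rfl, h.u_fresh hwG, h.y1_fresh hwG, h.y2_fresh hwG]
    by_cases hw0 : w = x0
    · subst hw0
      simp only [ne_eq, not_true_eq_false, false_and, and_false, iff_false]
      exact not_isLeafN_of_outArcs (by simp [h.outArcs_x0 hx0])
    rw [isLeafN_congr (by simp [h.mem_verts, hwG, hwj])
      (congrArg Finset.card (h.inArcs_of_ne hG hwG hwj))
      (congrArg Finset.card (h.outArcs_of_ne hG hw0 (ne_of_mem_of_not_mem hwG h.u_fresh)))]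
    simp [hw0, hwj]
  · refine ⟨fun hl => ?_, ?_⟩
    · rcases h.mem_verts.1 hl.1 with hw | rfl | hw | hw
      · exact absurd hw.1 hwG
      · exact absurd hl (not_isLeafN_of_outArcs (by simp [h.outArcs_u hG hx0]))
      · exact Or.inl hw
      · exact Or.inr (Or.inl hw)
    · rintro (rfl | rfl | ⟨hl, -⟩)
      exacts [h.isLeafN_y1 hG hx0, h.isLeafN_y2 hG hx0, absurd hl.1 hwG]

include hxj

theorem degreeCompatible : DegreeCompatible G G' where
  old w hw hwG := by
    have hwj : w ≠ xj := ((h.mem_verts.1 hw).resolve_right fun e => by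
      rcases e with rfl | rfl | rfl
      exacts [h.u_fresh hwG, h.y1_fresh hwG, h.y2_fresh hwG]).2
    refine ⟨congrArg Finset.card (h.inArcs_of_ne hG hwG hwj), ?_⟩
    by_cases hw0 : w = x0
    · subst hw0
      exact Or.inr ⟨hx0, by rw [outDeg_eq_card_outArcs, h.outArcs_x0 hx0,
        Finset.card_pair h.c1_ne_c3]⟩
    · exact Or.inl (congrArg Finset.card
        (h.outArcs_of_ne hG hw0 (ne_of_mem_of_not_mem hwG h.u_fresh)))
  new w hw hwG := by
    rcases h.mem_verts.1 hw with hw | rfl | rfl | rfl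
    · exact absurd hw.1 hwG
    · refine Or.inr (Or.inr ⟨hw, ?_, ?_⟩)
      · rw [inDeg_eq_card_inArcs, h.inArcs_u hG,
          Finset.card_pair (ne_of_mem_of_not_mem h.az_mem h.c1_fresh)]
      · rw [outDeg_eq_card_outArcs, h.outArcs_u hG hx0, Finset.card_singleton]
    · exact Or.inl (h.isLeafN_y1 hG hx0)
    · exact Or.inl (h.isLeafN_y2 hG hx0)
  root_mem r hr := h.mem_verts.2 (Or.inl ⟨hr.1, hr.ne_of_isLeafN hxj⟩)

theorem nPaths_of_ne {w : ℕ} (hw : w ∈ G.verts) (hwj : w ≠ xj) (r : ℕ) :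
    nPaths G' r w = nPaths G r w := by
  refine (h.agreesOutside hG hx0).nPaths_eq (D := {xj}) (fun a ha hD => ?_)
    (fun a ha => hxj.src_ne a ha) hw (h.mem_verts.2 (Or.inl ⟨hw, hwj⟩)) ?_ hwj r
  · cases h
    grind
  · simp [ne_of_mem_of_not_mem hw h.u_fresh, ne_of_mem_of_not_mem hw h.y1_fresh,
      ne_of_mem_of_not_mem hw h.y2_fresh]

include hx0j

theorem isPhylo : IsPhylo G' := by
  refine (h.degreeCompatible hG hx0 hxj).isPhylo hG ?_ ?_ ?_ ((h.agreesOutside hG hx0).acyclic hG)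
  · have := hG.src_mem; have := hxj.src_ne; have := hx0.1; cases h; grind
  · have := hG.tgt_mem; have := hxj.eq_of_tgt_eq h.az_mem h.old_tgt_az; cases h; grind
  · have := hG.no_loop; have := hG.src_mem; have := hx0.1; cases h; grind

theorem nPaths_u {r : ℕ} (hr : IsRootN G r) :
    nPaths G' r u = nPaths G r xj + nPaths G r x0 := by
  rw [nPaths_of_inArcs_eq_pair (h.isPhylo hG hx0 hxj hx0j) (ne_of_mem_of_not_mem hr.1 h.u_fresh)
    (ne_of_mem_of_not_mem h.az_mem h.c1_fresh) (h.inArcs_u hG), h.src_az, h.src_c1,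
    h.nPaths_of_ne hG hx0 hxj (hG.src_mem az h.az_mem) (hxj.src_ne az h.az_mem),
    h.nPaths_of_ne hG hx0 hxj hx0.1 hx0j,
    nPaths_of_inArcs_eq_singleton hG (hr.ne_of_isLeafN hxj) (hxj.inArcs_eq h.az_mem h.old_tgt_az)]

theorem nPaths_y1 {r : ℕ} (hr : IsRootN G r) :
    nPaths G' r y1 = nPaths G r xj + nPaths G r x0 := by
  rw [nPaths_of_inArcs_eq_singleton (h.isPhylo hG hx0 hxj hx0j)
    (ne_of_mem_of_not_mem hr.1 h.y1_fresh) (h.inArcs_y1 hG), h.src_c2,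
    h.nPaths_u hG hx0 hxj hx0j hr]

theorem nPaths_y2 {r : ℕ} (hr : IsRootN G r) : nPaths G' r y2 = nPaths G r x0 := by
  rw [nPaths_of_inArcs_eq_singleton (h.isPhylo hG hx0 hxj hx0j)
    (ne_of_mem_of_not_mem hr.1 h.y2_fresh) (h.inArcs_y2 hG), h.src_c3,
    h.nPaths_of_ne hG hx0 hxj hx0.1 hx0j]

end IsInsertBack

theorem leafList_of_insertBack {R'' R' : LNet} {k n y1 y2 : ℕ} (hl0 : R'.leaf 0 = y1)
    (hl1 : R'.leaf 1 = y2) (hmid : ∀ i, 1 ≤ i → i < k + 1 → R'.leaf (i + 1) = R''.leaf i)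
    (hhigh : ∀ i, k + 1 < i → R'.leaf i = R''.leaf i) :
    leafList R' (k + 2 + n) = y1 :: y2 :: ((List.range k).map fun i => R''.leaf (i + 1)) ++
      (List.range n).map fun i => R''.leaf (k + 2 + i) := by
  rw [leafList_add, leafList_add_two, hl0, hl1]
  simp only [List.cons_append, List.cons.injEq, true_and]
  congr 1
  · exact List.map_congr_left fun i hi =>
      hmid (i + 1) (by omega) (by have := List.mem_range.1 hi; omega)
  · exact List.map_congr_left fun i _ => hhigh _ (by omega)

theorem InsertBackOp.realizesL {R'' R' : LNet} {t0 α : ℕ} {t d : List ℕ}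
    (hR : RealizesL R'' (t0 :: t ++ α :: d)) (hop : InsertBackOp (t.length + 1) R'' R') :
    RealizesL R' ((α + t0) :: t0 :: t ++ d) := by
  obtain ⟨u, y1, y2, c1, c2, c3, az, hu, hy1, hy2, huy1, huy2, hy12, hc1, hc2, hc3, hc12, hc13,
    hc23, haz, htaz, hV, hA, hold, hsaz, htaz', hsc1, htc1, hsc2, htc2, hsc3, htc3, hl0, hl1,
    hmid, hhigh⟩ := hop
  have h : IsInsertBack R''.net R'.net (R''.leaf 0) (R''.leaf (t.length + 1)) u y1 y2 c1 c2 c3 az :=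
    ⟨hu, hy1, hy2, huy1, huy2, hy12, hc1, hc2, hc3, hc12, hc13, hc23, haz, htaz, hV, hA, hold,
      hsaz, htaz', hsc1, htc1, hsc2, htc2, hsc3, htc3⟩
  rw [realizesL_iff, show (t0 :: t ++ α :: d).length = t.length + 2 + d.length by
    simp only [List.length_cons, List.length_append]; omega,
    leafList_add_two_add] at hR
  rw [realizesL_iff, show ((α + t0) :: t0 :: t ++ d).length = t.length + 2 + d.length by
    simp only [List.length_cons, List.length_append],
    leafList_of_insertBack hl0 hl1 hmid hhigh]
  set A := (List.range t.length).map fun i => R''.leaf (i + 1)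
  set B := (List.range d.length).map fun i => R''.leaf (t.length + 2 + i)
  obtain ⟨hG, hnd, hleaf, hcount⟩ := hR
  simp only [List.cons_append, List.nodup_cons, List.nodup_middle, List.mem_append,
    List.mem_cons, not_or] at hnd
  obtain ⟨⟨hx0A, hx0j, hx0B⟩, ⟨hxjA, hxjB⟩, hAB⟩ := hnd
  have hx0 : IsLeafN R''.net (R''.leaf 0) := (hleaf _).2 (by simp)
  have hxj' : IsLeafN R''.net (R''.leaf (t.length + 1)) := (hleaf _).2 (by simp)
  have hABv : ∀ v ∈ A ++ B, v ∈ R''.net.verts := fun v hv =>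
    ((hleaf v).2 (by simp only [List.mem_append, List.mem_cons] at hv ⊢; tauto)).1
  refine ⟨h.isPhylo hG hx0 hxj' hx0j, ?_, fun v => ?_, fun r hr => ?_⟩
  · simp only [List.cons_append, List.nodup_cons, List.mem_cons, not_or]
    exact ⟨⟨hy12, fun hv => hy1 (hABv _ hv)⟩, fun hv => hy2 (hABv _ hv), hAB⟩
  · rw [h.isLeafN_iff hG hx0, hleaf]
    simp only [List.cons_append, List.mem_cons, List.mem_append]
    grind
  · have hrG := ((h.degreeCompatible hG hx0 hxj').isRootN_iff r).1 hr
    have hc := hcount r hrG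
    simp only [List.cons_append, List.map_cons, List.map_append, List.cons.injEq] at hc ⊢
    obtain ⟨hx0t, hc⟩ := hc
    obtain ⟨hAt, hc⟩ := List.append_inj hc (by simp [A])
    simp only [List.cons.injEq] at hc
    rw [h.nPaths_y1 hG hx0 hxj' hx0j hrG, h.nPaths_y2 hG hx0 hxj' hx0j hrG, hc.1, hx0t, ← hAt,
      ← hc.2]
    refine ⟨rfl, rfl, ?_⟩
    congr 1 <;> refine List.map_congr_left fun v hv => h.nPaths_of_ne hG hx0 hxj'
      (hABv v (by simp [hv])) (fun e => ?_) r
    exacts [hxjA (e ▸ hv), hxjB (e ▸ hv)]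

end InsertBack

section Simplification

theorem simpStep_iterate_of_isSimpleP {l : List ℕ} (h : IsSimpleP l) (k : ℕ) :
    simpStep^[k] l = l :=
  Function.iterate_fixed (by unfold simpStep; exact if_pos ⟨h.2.1, h.2.2⟩) k

theorem simpStep_cons_cons {m1 m2 : ℕ} {rest : List ℕ} (h : ¬ IsSimpleP (m1 :: m2 :: rest)) :
    simpStep (m1 :: m2 :: rest) =
      if m1 = m2 then m2 :: rest
      else if m2 < m1 - m2 then (m1 - m2) :: m2 :: rest
      else insertDesc (m1 - m2) (m2 :: rest) := by
  unfold simpStep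
  rw [if_neg fun hs => h ⟨List.cons_ne_nil _ _, hs⟩]

theorem insertDesc_eq (x : ℕ) (l : List ℕ) :
    insertDesc x l = l.takeWhile (x ≤ ·) ++ x :: l.dropWhile (x ≤ ·) := by
  induction l with
  | nil => rfl
  | cons y l ih => by_cases h : x ≤ y <;> simp [insertDesc, h, ih]

end Simplification

theorem TraceStep.realizesL {m' : List ℕ} {R'' R' : LNet} (hstep : TraceStep m' R'' R')
    (hR : RealizesL R'' (simpStep m')) : RealizesL R' m' := by
  obtain ⟨hlen, hns, hcase⟩ := hstep
  obtain ⟨m1, m2, rest, rfl⟩ : ∃ m1 m2 rest, m' = m1 :: m2 :: rest := by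
    match m', hlen with
    | m1 :: m2 :: rest, _ => exact ⟨m1, m2, rest, rfl⟩
  rw [simpStep_cons_cons hns] at hR
  dsimp only [List.headI_cons, List.tail_cons] at hcase
  rcases hcase with ⟨heq, hop⟩ | ⟨hlt, hop⟩ | ⟨hpos, hle, hop⟩
  · rw [if_pos heq] at hR
    rw [heq]
    exact hop.realizesL hR
  · rw [if_neg (by omega), if_pos hlt] at hR
    simpa only [Nat.sub_add_cancel (by omega : m2 ≤ m1)] using hop.realizesL hR
  · have hm2 := List.takeWhile_cons_of_pos (p := (m1 - m2 ≤ ·)) (l := rest) (decide_eq_true hle)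
    rw [if_neg (by omega), if_neg (by omega), insertDesc_eq, hm2] at hR
    change InsertBackOp ((m2 :: rest).takeWhile (m1 - m2 ≤ ·)).length R'' R' at hop
    rw [hm2, List.length_cons] at hop
    have := InsertBackOp.realizesL hR hop
    rwa [Nat.sub_add_cancel (by omega : m2 ≤ m1), List.cons_append, ← hm2,
      List.takeWhile_append_dropWhile] at this

theorem traceback_realizes_general (m mt : List ℕ)
    (ht : IsTerminal m mt) (core : LNet) (hcore : RealizesL core mt) :
    ∀ N : LNet, TracebackFrom core m N → RealizesL N m := by
  obtain ⟨hsimple, k, hk⟩ := ht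
  intro N hN
  induction hN generalizing k with
  | base m hsimp =>
    rwa [← simpStep_iterate_of_isSimpleP hsimp k, hk]
  | step m' R'' R' _ hstep ih =>
    cases k with
    | zero => exact absurd (Function.iterate_zero_apply simpStep m' ▸ hk ▸ hsimple) hstep.2.1
    | succ k => exact hstep.realizesL (ih k hk)

/-- For any ploidy profile `m` on `X` with terminal element `mt`
and any choice of core network for `m` (i.e. a realization of `mt`), any network
`N(m)` obtained by the traceback through the simplification sequence of `m` is a
phylogenetic network on `X` realizing `m`. -/
theorem traceback_realizes (m mt : List ℕ) (hm : IsProfileL m)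
    (ht : IsTerminal m mt) (core : LNet) (hcore : RealizesL core mt) :
    ∀ N : LNet, TracebackFrom core m N → RealizesL N m :=
  traceback_realizes_general m mt ht core hcore

end Ploidy
end
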